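/- arXiv:2603.02720 — 4 statements merged into one kernel-verified Lean document; each statement's English description precedes it below -/
import Mathlib

section
/- Let X be a third-order real tensor of size I₁ × I₂ × I₃. For each pair 1 ≤ n₁ < n₂ ≤ 3, let X_{<n₁n₂>} denote whichever of the unfoldings X_{<n₁>}, X_{<n₂>} has the smaller rank, and let R_{n₁,n₂} ≤ min(rank(X_{<n₁>}), rank(X_{<n₂>})). Then there exists a third-order FCTN decomposition E of size I₁ × I₂ × I₃ with ranks (R_{1,2}, R_{1,3}, R_{2,3}) such that ‖X − E‖_F² ≤ Σ_{n₁=1}^{2} Σ_{n₂=n₁+1}^{3} Σ_{i=R_{n₁,n₂}+1}^{rank(X_{<n₁n₂>})} σ_i(X_{<n₁n₂>})², where σ_i(M) denotes the i-th largest singular value of a matrix M. -/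
open Matrix

/-- The `i`-th largest singular value (`0`-indexed, so `sval M 0 = σ₁(M)`) of a
real matrix `M`: the square roots of the eigenvalues of `MᵀM = MᴴM`, arranged
in decreasing order. -/
noncomputable def sval {m n : ℕ} (M : Matrix (Fin m) (Fin n) ℝ) (i : ℕ) : ℝ :=
  if h : i < n then
    Real.sqrt ((Matrix.isHermitian_conjTranspose_mul_self M).eigenvalues
      (Tuple.sort (fun j => -(Matrix.isHermitian_conjTranspose_mul_self M).eigenvalues j) ⟨i, h⟩))
  else 0

/-- The tail energy `Σ_{i=R+1}^{rank M} σ_i(M)²` (in `1`-based notation) of a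
real matrix `M`. -/
noncomputable def tailEnergy {m n : ℕ} (M : Matrix (Fin m) (Fin n) ℝ) (R : ℕ) : ℝ :=
  ∑ i ∈ Finset.Ico R M.rank, sval M i ^ 2

/-- Mode-1 unfolding of a third-order tensor. -/
def unfold1 {I₁ I₂ I₃ : ℕ} (X : Fin I₁ → Fin I₂ → Fin I₃ → ℝ) :
    Matrix (Fin I₁) (Fin (I₂ * I₃)) ℝ :=
  Matrix.of fun i j => X i (finProdFinEquiv.symm j).1 (finProdFinEquiv.symm j).2

/-- Mode-2 unfolding of a third-order tensor. -/
def unfold2 {I₁ I₂ I₃ : ℕ} (X : Fin I₁ → Fin I₂ → Fin I₃ → ℝ) :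
    Matrix (Fin I₂) (Fin (I₁ * I₃)) ℝ :=
  Matrix.of fun i j => X (finProdFinEquiv.symm j).1 i (finProdFinEquiv.symm j).2

/-- Mode-3 unfolding of a third-order tensor. -/
def unfold3 {I₁ I₂ I₃ : ℕ} (X : Fin I₁ → Fin I₂ → Fin I₃ → ℝ) :
    Matrix (Fin I₃) (Fin (I₁ * I₂)) ℝ :=
  Matrix.of fun i j => X (finProdFinEquiv.symm j).1 (finProdFinEquiv.symm j).2 i

lemma sqnorm_eq_trace {m n : ℕ} (A : Matrix (Fin m) (Fin n) ℝ) :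
    ∑ i, ∑ j, A i j ^ 2 = (Aᵀ * A).trace := by
  rw [Matrix.trace]
  simp only [Matrix.diag_apply, Matrix.mul_apply, Matrix.transpose_apply]
  rw [Finset.sum_comm]
  simp [pow_two]

lemma sum_eigenvalues {n : ℕ} (A : Matrix (Fin n) (Fin n) ℝ) (hA : A.IsHermitian) :
    ∑ j, hA.eigenvalues j = A.trace := by
  rw [hA.trace_eq_sum_eigenvalues]
  simp

lemma exists_trunc {m n : ℕ} (M : Matrix (Fin m) (Fin n) ℝ) (R : ℕ) (hR : R ≤ M.rank) :
    ∃ U : Matrix (Fin m) (Fin R) ℝ, Uᵀ * U = 1 ∧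
      ∑ i, ∑ j, (M - U * Uᵀ * M) i j ^ 2 ≤ tailEnergy M R := by
  classical
  set hM := Matrix.isHermitian_conjTranspose_mul_self M with hMdef
  set lam : Fin n → ℝ := hM.eigenvalues with hlam
  set v : Fin n → EuclideanSpace ℝ (Fin n) := fun j => hM.eigenvectorBasis j with hv
  set σ : Equiv.Perm (Fin n) := Tuple.sort (fun j => -lam j) with hσ
  have hnonneg : ∀ j, 0 ≤ lam j :=
    (Matrix.posSemidef_conjTranspose_mul_self M).eigenvalues_nonneg
  have hrank_n : M.rank ≤ n := M.rank_le_width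
  have hRn : R ≤ n := hR.trans hrank_n
  have hanti : Antitone fun i => lam (σ i) := by
    intro i j hij
    have := Tuple.monotone_sort (fun j => -lam j) hij
    simpa using this
  have hcard : (Finset.univ.filter fun i => lam (σ i) ≠ 0).card = M.rank := by
    have h1 : M.rank = Fintype.card {i // lam i ≠ 0} := by
      have h0 := hM.rank_eq_card_non_zero_eigs
      rw [show (Mᴴ * M).rank = M.rank by
        rw [conjTranspose_eq_transpose_of_trivial, rank_transpose_mul_self]] at h0
      exact h0
    have h2 : Fintype.card {i // lam (σ i) ≠ 0} = Fintype.card {i // lam i ≠ 0} :=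
      Fintype.card_congr (σ.subtypeEquiv fun a => Iff.rfl)
    rw [Fintype.card_subtype] at h2
    rw [h1, ← h2]
  have hzero : ∀ i : Fin n, M.rank ≤ (i : ℕ) → lam (σ i) = 0 := by
    intro i hi
    by_contra hne
    have hsub : Finset.Iic i ⊆ Finset.univ.filter fun j => lam (σ j) ≠ 0 := by
      intro j hj
      simp only [Finset.mem_filter, Finset.mem_univ, true_and]
      intro h0
      have h1 : lam (σ i) ≤ lam (σ j) := hanti (Finset.mem_Iic.mp hj)
      have h2 := hnonneg (σ i)
      exact hne (le_antisymm (h0 ▸ h1) h2)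
    have hc := Finset.card_le_card hsub
    rw [Fin.card_Iic, hcard] at hc
    omega
  have hpos : ∀ i : Fin n, (i : ℕ) < M.rank → 0 < lam (σ i) := by
    intro i hi
    rcases (hnonneg (σ i)).lt_or_eq with h | h
    · exact h
    exfalso
    have hsub : (Finset.univ.filter fun j => lam (σ j) ≠ 0) ⊆ Finset.Iio i := by
      intro j hj
      simp only [Finset.mem_filter, Finset.mem_univ, true_and] at hj
      rw [Finset.mem_Iio]
      by_contra hj2
      have h3 : lam (σ j) ≤ lam (σ i) := hanti (not_lt.mp hj2)
      exact hj (le_antisymm (h ▸ h3) (hnonneg _))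
    have hc := Finset.card_le_card hsub
    rw [Fin.card_Iio, hcard] at hc
    omega
  -- eigen equation and orthonormality
  have hmv : ∀ (x : Fin n → ℝ) (z : Fin m → ℝ), (M *ᵥ x) ⬝ᵥ z = x ⬝ᵥ (Mᵀ *ᵥ z) := by
    intro x z
    rw [Matrix.dotProduct_mulVec, Matrix.vecMul_transpose]
  have heig2 : ∀ j : Fin n, Mᵀ *ᵥ (M *ᵥ ⇑(hM.eigenvectorBasis j)) =
      lam j • ⇑(hM.eigenvectorBasis j) := by
    intro j
    rw [Matrix.mulVec_mulVec, show Mᵀ * M = Mᴴ * M from by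
      rw [conjTranspose_eq_transpose_of_trivial]]
    exact hM.mulVec_eigenvectorBasis j
  set v : Fin n → Fin n → ℝ := fun j => ⇑(hM.eigenvectorBasis j) with hvdef
  have horth : ∀ i j : Fin n, v i ⬝ᵥ v j = if i = j then 1 else 0 := by
    intro i j
    have h := hM.eigenvectorBasis.orthonormal
    rw [orthonormal_iff_ite] at h
    have h2 := h i j
    simp [dotProduct, PiLp.inner_apply, RCLike.inner_apply, starRingEnd_apply] at h2
    rw [← h2]
    exact Finset.sum_congr rfl fun _ _ => mul_comm _ _
  have hdot : ∀ a b : Fin n, (M *ᵥ v a) ⬝ᵥ (M *ᵥ v b) = lam b * (if a = b then 1 else 0) := by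
    intro a b
    rw [hmv, heig2, dotProduct_smul, smul_eq_mul, horth]
  set e : Fin R → Fin n := fun r => σ (Fin.castLE hRn r) with hedef
  have hepos : ∀ r : Fin R, 0 < lam (e r) := fun r => hpos _ (lt_of_lt_of_le r.2 hR)
  have heinj : Function.Injective e :=
    fun a b hab => Fin.castLE_injective hRn (σ.injective hab)
  have hsqp : ∀ r : Fin R, 0 < Real.sqrt (lam (e r)) :=
    fun r => Real.sqrt_pos.mpr (hepos r)
  set U : Matrix (Fin m) (Fin R) ℝ :=
    Matrix.of fun i r => (Real.sqrt (lam (e r)))⁻¹ * (M *ᵥ v (e r)) i with hUdef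
  have hUU : Uᵀ * U = 1 := by
    ext r s
    rw [Matrix.mul_apply, Matrix.one_apply]
    simp only [Matrix.transpose_apply, hUdef, Matrix.of_apply]
    have h1 : ∑ i, (Real.sqrt (lam (e r)))⁻¹ * (M *ᵥ v (e r)) i *
        ((Real.sqrt (lam (e s)))⁻¹ * (M *ᵥ v (e s)) i)
        = (Real.sqrt (lam (e r)))⁻¹ * (Real.sqrt (lam (e s)))⁻¹ *
          ((M *ᵥ v (e r)) ⬝ᵥ (M *ᵥ v (e s))) := by
      rw [dotProduct, Finset.mul_sum]
      exact Finset.sum_congr rfl fun i _ => by ring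
    rw [h1, hdot]
    by_cases hrs : r = s
    · subst hrs
      rw [if_pos rfl, if_pos rfl, mul_one]
      rw [show lam (e r) = Real.sqrt (lam (e r)) * Real.sqrt (lam (e r)) from
        (Real.mul_self_sqrt (hepos r).le).symm]
      field_simp
      rw [Real.sq_sqrt (sq_nonneg _)]
      exact div_self (pow_ne_zero 2 (hsqp r).ne')
    · rw [if_neg (fun h => hrs (heinj h)), if_neg hrs]
      ring
  have hcol : ∀ (x : Fin n → ℝ) (j : Fin n),
      ∑ i, (M *ᵥ x) i * M i j = (Mᵀ *ᵥ (M *ᵥ x)) j := by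
    intro x j
    simp only [Matrix.mulVec, dotProduct, Matrix.transpose_apply]
    exact Finset.sum_congr rfl fun i _ => mul_comm _ _
  have hB : ∀ (r : Fin R) (j : Fin n),
      (Uᵀ * M) r j = Real.sqrt (lam (e r)) * v (e r) j := by
    intro r j
    rw [Matrix.mul_apply]
    simp only [Matrix.transpose_apply, hUdef, Matrix.of_apply]
    rw [show ∑ i, (Real.sqrt (lam (e r)))⁻¹ * (M *ᵥ v (e r)) i * M i j
        = (Real.sqrt (lam (e r)))⁻¹ * ∑ i, (M *ᵥ v (e r)) i * M i j from by
      rw [Finset.mul_sum]; exact Finset.sum_congr rfl fun i _ => by ring]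
    rw [hcol, heig2]
    simp only [Pi.smul_apply, smul_eq_mul]
    rw [← mul_assoc]
    congr 1
    field_simp
    rw [div_eq_iff (hsqp r).ne', Real.mul_self_sqrt (hepos r).le]
  have hBsq : ∑ r, ∑ j, (Uᵀ * M) r j ^ 2 = ∑ r : Fin R, lam (e r) := by
    apply Finset.sum_congr rfl
    intro r _
    simp only [hB, mul_pow]
    rw [← Finset.mul_sum, show ∑ j, v (e r) j ^ 2 = v (e r) ⬝ᵥ v (e r) from by
      simp [dotProduct, pow_two], horth, if_pos rfl,
      Real.sq_sqrt (hepos r).le, mul_one]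
  refine ⟨U, hUU, ?_⟩
  -- energy identity
  have henergy : ∑ i, ∑ j, (M - U * Uᵀ * M) i j ^ 2
      = ∑ i, ∑ j, M i j ^ 2 - ∑ r, ∑ j, (Uᵀ * M) r j ^ 2 := by
    rw [sqnorm_eq_trace, sqnorm_eq_trace, sqnorm_eq_trace]
    have h1 : (M - U * Uᵀ * M)ᵀ * (M - U * Uᵀ * M)
        = Mᵀ * M - (Uᵀ * M)ᵀ * (Uᵀ * M) := by
      have e1 : (U * Uᵀ * M)ᵀ * M = (Uᵀ * M)ᵀ * (Uᵀ * M) := by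
        simp only [Matrix.transpose_mul, Matrix.transpose_transpose, Matrix.mul_assoc]
      have e2 : Mᵀ * (U * Uᵀ * M) = (Uᵀ * M)ᵀ * (Uᵀ * M) := by
        simp only [Matrix.transpose_mul, Matrix.transpose_transpose, Matrix.mul_assoc]
      have e3 : (U * Uᵀ * M)ᵀ * (U * Uᵀ * M) = (Uᵀ * M)ᵀ * (Uᵀ * M) := by
        simp only [Matrix.transpose_mul, Matrix.transpose_transpose, Matrix.mul_assoc]
        rw [show U * (Uᵀ * (U * (Uᵀ * M))) = U * ((Uᵀ * U) * (Uᵀ * M)) from by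
          rw [Matrix.mul_assoc], hUU, Matrix.one_mul]
      rw [Matrix.transpose_sub, Matrix.sub_mul, Matrix.mul_sub, Matrix.mul_sub, e1, e2, e3]
      abel
    rw [h1, Matrix.trace_sub]
  have htot : ∑ i, ∑ j, M i j ^ 2 = ∑ j, lam j := by
    rw [sqnorm_eq_trace]
    rw [show Mᵀ * M = Mᴴ * M from by rw [conjTranspose_eq_transpose_of_trivial]]
    exact (sum_eigenvalues _ hM).symm
  -- index bookkeeping
  set g : ℕ → ℝ := fun i => if h : i < n then lam (σ ⟨i, h⟩) else 0 with hgdef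
  have htot2 : ∑ j, lam j = ∑ i ∈ Finset.range n, g i := by
    rw [← Equiv.sum_comp σ lam]
    rw [← Fin.sum_univ_eq_sum_range g n]
    apply Finset.sum_congr rfl
    intro j _
    simp only [hgdef, j.isLt, dif_pos, Fin.eta]
  have hpart : ∑ r : Fin R, lam (e r) = ∑ i ∈ Finset.range R, g i := by
    rw [← Fin.sum_univ_eq_sum_range g R]
    apply Finset.sum_congr rfl
    intro r _
    simp only [hgdef, hedef, dif_pos (lt_of_lt_of_le r.isLt hRn)]
    congr 1
  have htail : tailEnergy M R = ∑ i ∈ Finset.Ico R M.rank, g i := by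
    unfold tailEnergy
    apply Finset.sum_congr rfl
    intro i hi
    rw [Finset.mem_Ico] at hi
    have hin : i < n := lt_of_lt_of_le hi.2 hrank_n
    rw [sval, dif_pos hin, hgdef]
    simp only [dif_pos hin]
    rw [Real.sq_sqrt]
    exact hnonneg _
  have hhi : ∑ i ∈ Finset.Ico M.rank n, g i = 0 := by
    apply Finset.sum_eq_zero
    intro i hi
    rw [Finset.mem_Ico] at hi
    simp only [hgdef, dif_pos hi.2]
    exact hzero _ hi.1
  rw [henergy, hBsq, htot, htot2, hpart, htail]
  simp only [Finset.range_eq_Ico]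
  rw [← Finset.sum_Ico_consecutive g (Nat.zero_le R) hRn,
    ← Finset.sum_Ico_consecutive g hR hrank_n, hhi, add_zero]
  linarith

lemma sqnorm_nonneg {m n : ℕ} (A : Matrix (Fin m) (Fin n) ℝ) :
    0 ≤ ∑ i, ∑ j, A i j ^ 2 :=
  Finset.sum_nonneg fun _ _ => Finset.sum_nonneg fun _ _ => sq_nonneg _

lemma sqnorm_add_of_orth {a b : ℕ} (S T : Matrix (Fin a) (Fin b) ℝ) (h : Sᵀ * T = 0) :
    ∑ i, ∑ j, (S + T) i j ^ 2 = (∑ i, ∑ j, S i j ^ 2) + ∑ i, ∑ j, T i j ^ 2 := by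
  have hTS : Tᵀ * S = 0 := by
    have h2 := congrArg Matrix.transpose h
    rwa [Matrix.transpose_mul, Matrix.transpose_transpose, Matrix.transpose_zero] at h2
  rw [sqnorm_eq_trace, sqnorm_eq_trace, sqnorm_eq_trace]
  have hexp : (S + T)ᵀ * (S + T) = Sᵀ * S + Tᵀ * T := by
    rw [Matrix.transpose_add, Matrix.add_mul, Matrix.mul_add, Matrix.mul_add, h, hTS]
    simp
  rw [hexp, Matrix.trace_add]

lemma mstep {a b : ℕ} (P : Matrix (Fin a) (Fin a) ℝ) (hs : Pᵀ = P) (hi : P * P = P)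
    (A B : Matrix (Fin a) (Fin b) ℝ) :
    ∑ i, ∑ j, (A - P * B) i j ^ 2
      ≤ (∑ i, ∑ j, (A - P * A) i j ^ 2) + ∑ i, ∑ j, (A - B) i j ^ 2 := by
  have hsplit : A - P * B = (A - P * A) + P * (A - B) := by
    rw [Matrix.mul_sub]; abel
  have hST : (A - P * A)ᵀ * (P * (A - B)) = 0 := by
    rw [Matrix.transpose_sub, Matrix.sub_mul, Matrix.transpose_mul, hs]
    rw [show Aᵀ * P * (P * (A - B)) = Aᵀ * (P * P) * (A - B) from by
      simp only [Matrix.mul_assoc], hi, Matrix.mul_assoc]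
    exact sub_self _
  rw [hsplit, sqnorm_add_of_orth _ _ hST]
  have hC : A - B = (1 - P) * (A - B) + P * (A - B) := by
    rw [Matrix.sub_mul, Matrix.one_mul]; abel
  have hQT : ((1 - P) * (A - B))ᵀ * (P * (A - B)) = 0 := by
    rw [Matrix.transpose_mul, show ((1 : Matrix (Fin a) (Fin a) ℝ) - P)ᵀ = 1 - P from by
      rw [Matrix.transpose_sub, Matrix.transpose_one, hs]]
    rw [show (A - B)ᵀ * (1 - P) * (P * (A - B))
        = (A - B)ᵀ * ((1 - P) * P) * (A - B) from by simp only [Matrix.mul_assoc]]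
    rw [Matrix.sub_mul, Matrix.one_mul, hi, sub_self, Matrix.mul_zero, Matrix.zero_mul]
  have hle : ∑ i, ∑ j, (P * (A - B)) i j ^ 2 ≤ ∑ i, ∑ j, (A - B) i j ^ 2 := by
    conv_rhs => rw [hC]
    rw [sqnorm_add_of_orth _ _ hQT]
    have := sqnorm_nonneg ((1 - P) * (A - B))
    linarith
  linarith


lemma proj2 {α β : Type*} [Fintype α] [Fintype β] (A : α → ℝ) (B : α → β → ℝ) (x : β → ℝ) :
    ∑ c, (∑ j, A j * B j c) * x c = ∑ j, A j * ∑ c, B j c * x c := by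
  simp only [Finset.sum_mul, Finset.mul_sum]
  rw [Finset.sum_comm]
  exact Finset.sum_congr rfl fun j _ => Finset.sum_congr rfl fun c _ => by ring

lemma fctn_core {Ik Im In : Type*} {Rp Rq Rs : Type*} [Fintype Ik] [Fintype Im]
    [Fintype Rp] [Fintype Rq] [Fintype Rs]
    (Up : Ik → Rp → ℝ) (Uq : Ik → Rq → ℝ) (D : Im → Rs → ℝ) (Z : Ik → Im → In → ℝ)
    (ik : Ik) (im : Im) (inn : In) :
    (∑ j, (∑ a, Up ik a * Up j a) * ∑ t, (∑ c, Uq j c * Uq t c) *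
        ∑ jm, (∑ b, D im b * D jm b) * Z t jm inn)
      = ∑ a, ∑ c, ∑ b, (Up ik a * ∑ j, Up j a * Uq j c) * D im b *
          (∑ t, ∑ jm, Uq t c * D jm b * Z t jm inn) := by
  set g : Ik → ℝ := fun t => ∑ jm, (∑ b, D im b * D jm b) * Z t jm inn with hg
  set h : Rq → ℝ := fun c => ∑ t, Uq t c * g t with hh
  -- LHS
  have hL : (∑ j, (∑ a, Up ik a * Up j a) * ∑ t, (∑ c, Uq j c * Uq t c) *
        ∑ jm, (∑ b, D im b * D jm b) * Z t jm inn)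
      = ∑ a, Up ik a * ∑ j, Up j a * ∑ c, Uq j c * h c := by
    have hf : ∀ j, (∑ t, (∑ c, Uq j c * Uq t c) * g t) = ∑ c, Uq j c * h c := by
      intro j
      rw [show (∑ t, (∑ c, Uq j c * Uq t c) * g t)
          = ∑ t, (∑ c, Uq j c * Uq t c) * g t from rfl]
      calc ∑ t, (∑ c, Uq j c * Uq t c) * g t
          = ∑ c, Uq j c * ∑ t, Uq t c * g t := by
            simp only [Finset.sum_mul, Finset.mul_sum]
            rw [Finset.sum_comm]
            exact Finset.sum_congr rfl fun c _ => Finset.sum_congr rfl fun t _ => by ring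
        _ = ∑ c, Uq j c * h c := rfl
    calc (∑ j, (∑ a, Up ik a * Up j a) * ∑ t, (∑ c, Uq j c * Uq t c) * g t)
        = ∑ j, (∑ a, Up ik a * Up j a) * (∑ c, Uq j c * h c) :=
          Finset.sum_congr rfl fun j _ => by rw [hf j]
      _ = ∑ a, Up ik a * ∑ j, Up j a * (∑ c, Uq j c * h c) :=
          proj2 (fun a => Up ik a) (fun a j => Up j a) _
  have hG : ∀ c, ∑ b, D im b * (∑ t, ∑ jm, Uq t c * D jm b * Z t jm inn) = h c := by
    intro c
    calc ∑ b, D im b * (∑ t, ∑ jm, Uq t c * D jm b * Z t jm inn)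
        = ∑ b, ∑ t, ∑ jm, D im b * (Uq t c * D jm b * Z t jm inn) := by
          apply Finset.sum_congr rfl
          intro b _
          simp only [Finset.mul_sum]
      _ = ∑ t, ∑ b, ∑ jm, D im b * (Uq t c * D jm b * Z t jm inn) := Finset.sum_comm
      _ = ∑ t, ∑ jm, ∑ b, D im b * (Uq t c * D jm b * Z t jm inn) :=
          Finset.sum_congr rfl fun t _ => Finset.sum_comm
      _ = ∑ t, Uq t c * g t := by
          apply Finset.sum_congr rfl
          intro t _
          rw [hg]
          simp only [Finset.mul_sum, Finset.sum_mul]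
          apply Finset.sum_congr rfl
          intro jm _
          apply Finset.sum_congr rfl
          intro b _
          ring
  have hR : (∑ a, ∑ c, ∑ b, (Up ik a * ∑ j, Up j a * Uq j c) * D im b *
        (∑ t, ∑ jm, Uq t c * D jm b * Z t jm inn))
      = ∑ a, Up ik a * ∑ j, Up j a * ∑ c, Uq j c * h c := by
    calc (∑ a, ∑ c, ∑ b, (Up ik a * ∑ j, Up j a * Uq j c) * D im b *
          (∑ t, ∑ jm, Uq t c * D jm b * Z t jm inn))
        = ∑ a, ∑ c, (Up ik a * ∑ j, Up j a * Uq j c) * h c := by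
          apply Finset.sum_congr rfl
          intro a _
          apply Finset.sum_congr rfl
          intro c _
          rw [← hG c]
          conv_rhs => rw [Finset.mul_sum]
          apply Finset.sum_congr rfl
          intro b _
          ring
      _ = ∑ a, Up ik a * ∑ c, (∑ j, Up j a * Uq j c) * h c := by
          apply Finset.sum_congr rfl
          intro a _
          conv_rhs => rw [Finset.mul_sum]
          apply Finset.sum_congr rfl
          intro c _
          ring
      _ = ∑ a, Up ik a * ∑ j, Up j a * ∑ c, Uq j c * h c := by
          apply Finset.sum_congr rfl
          intro a _
          rw [proj2 (fun j => Up j a) Uq h]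
  rw [hL, hR]


lemma sum3_yxz {α β γ : Type*} [Fintype α] [Fintype β] [Fintype γ] (f : α → β → γ → ℝ) :
    ∑ y : β, ∑ x : α, ∑ z : γ, f x y z = ∑ x : α, ∑ y : β, ∑ z : γ, f x y z :=
  Finset.sum_comm

lemma sum3_xzy {α β γ : Type*} [Fintype α] [Fintype β] [Fintype γ] (f : α → β → γ → ℝ) :
    ∑ x : α, ∑ z : γ, ∑ y : β, f x y z = ∑ x : α, ∑ y : β, ∑ z : γ, f x y z :=
  Finset.sum_congr rfl fun _ _ => Finset.sum_comm

lemma sum3_yzx {α β γ : Type*} [Fintype α] [Fintype β] [Fintype γ] (f : α → β → γ → ℝ) :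
    ∑ y : β, ∑ z : γ, ∑ x : α, f x y z = ∑ x : α, ∑ y : β, ∑ z : γ, f x y z :=
  (Finset.sum_congr rfl fun _ _ => Finset.sum_comm).trans Finset.sum_comm

lemma sum3_zxy {α β γ : Type*} [Fintype α] [Fintype β] [Fintype γ] (f : α → β → γ → ℝ) :
    ∑ z : γ, ∑ x : α, ∑ y : β, f x y z = ∑ x : α, ∑ y : β, ∑ z : γ, f x y z :=
  Finset.sum_comm.trans (Finset.sum_congr rfl fun _ _ => Finset.sum_comm)

lemma sum3_zyx {α β γ : Type*} [Fintype α] [Fintype β] [Fintype γ] (f : α → β → γ → ℝ) :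
    ∑ z : γ, ∑ y : β, ∑ x : α, f x y z = ∑ x : α, ∑ y : β, ∑ z : γ, f x y z :=
  (Finset.sum_congr rfl fun _ _ => Finset.sum_comm).trans
    (Finset.sum_comm.trans (Finset.sum_congr rfl fun _ _ => Finset.sum_comm))


namespace FCTNAux

variable {I₁ I₂ I₃ : ℕ}

def act1 (P : Matrix (Fin I₁) (Fin I₁) ℝ) (A : Fin I₁ → Fin I₂ → Fin I₃ → ℝ) :
    Fin I₁ → Fin I₂ → Fin I₃ → ℝ := fun i₁ i₂ i₃ => ∑ j, P i₁ j * A j i₂ i₃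

def act2 (P : Matrix (Fin I₂) (Fin I₂) ℝ) (A : Fin I₁ → Fin I₂ → Fin I₃ → ℝ) :
    Fin I₁ → Fin I₂ → Fin I₃ → ℝ := fun i₁ i₂ i₃ => ∑ j, P i₂ j * A i₁ j i₃

def act3 (P : Matrix (Fin I₃) (Fin I₃) ℝ) (A : Fin I₁ → Fin I₂ → Fin I₃ → ℝ) :
    Fin I₁ → Fin I₂ → Fin I₃ → ℝ := fun i₁ i₂ i₃ => ∑ j, P i₃ j * A i₁ i₂ j

def nsq3 (A : Fin I₁ → Fin I₂ → Fin I₃ → ℝ) : ℝ := ∑ i₁, ∑ i₂, ∑ i₃, A i₁ i₂ i₃ ^ 2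

lemma nsq3_unfold1 (A : Fin I₁ → Fin I₂ → Fin I₃ → ℝ) :
    nsq3 A = ∑ i, ∑ j, unfold1 A i j ^ 2 := by
  unfold nsq3 unfold1
  apply Finset.sum_congr rfl
  intro i _
  calc ∑ i₂, ∑ i₃, A i i₂ i₃ ^ 2
      = ∑ p : Fin I₂ × Fin I₃, A i p.1 p.2 ^ 2 := by rw [Fintype.sum_prod_type]
    _ = _ := (Equiv.sum_comp finProdFinEquiv.symm
        (fun p : Fin I₂ × Fin I₃ => A i p.1 p.2 ^ 2)).symm

lemma nsq3_unfold2 (A : Fin I₁ → Fin I₂ → Fin I₃ → ℝ) :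
    nsq3 A = ∑ i, ∑ j, unfold2 A i j ^ 2 := by
  unfold nsq3 unfold2
  rw [Finset.sum_comm]
  apply Finset.sum_congr rfl
  intro i _
  calc ∑ i₁, ∑ i₃, A i₁ i i₃ ^ 2
      = ∑ p : Fin I₁ × Fin I₃, A p.1 i p.2 ^ 2 := by rw [Fintype.sum_prod_type]
    _ = _ := (Equiv.sum_comp finProdFinEquiv.symm
        (fun p : Fin I₁ × Fin I₃ => A p.1 i p.2 ^ 2)).symm

lemma nsq3_unfold3 (A : Fin I₁ → Fin I₂ → Fin I₃ → ℝ) :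
    nsq3 A = ∑ i, ∑ j, unfold3 A i j ^ 2 := by
  unfold nsq3 unfold3
  have h : ∀ i₁ : Fin I₁, ∑ i₂, ∑ i₃, A i₁ i₂ i₃ ^ 2 = ∑ i₃, ∑ i₂, A i₁ i₂ i₃ ^ 2 :=
    fun i₁ => Finset.sum_comm
  rw [Finset.sum_congr rfl fun i₁ _ => h i₁, Finset.sum_comm]
  apply Finset.sum_congr rfl
  intro i _
  calc ∑ i₁, ∑ i₂, A i₁ i₂ i ^ 2
      = ∑ p : Fin I₁ × Fin I₂, A p.1 p.2 i ^ 2 := by rw [Fintype.sum_prod_type]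
    _ = _ := (Equiv.sum_comp finProdFinEquiv.symm
        (fun p : Fin I₁ × Fin I₂ => A p.1 p.2 i ^ 2)).symm

lemma unfold1_act1 (P : Matrix (Fin I₁) (Fin I₁) ℝ) (A : Fin I₁ → Fin I₂ → Fin I₃ → ℝ) :
    unfold1 (act1 P A) = P * unfold1 A := by
  ext i j; simp [unfold1, act1, Matrix.mul_apply]

lemma unfold2_act2 (P : Matrix (Fin I₂) (Fin I₂) ℝ) (A : Fin I₁ → Fin I₂ → Fin I₃ → ℝ) :
    unfold2 (act2 P A) = P * unfold2 A := by
  ext i j; simp [unfold2, act2, Matrix.mul_apply]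

lemma unfold3_act3 (P : Matrix (Fin I₃) (Fin I₃) ℝ) (A : Fin I₁ → Fin I₂ → Fin I₃ → ℝ) :
    unfold3 (act3 P A) = P * unfold3 A := by
  ext i j; simp [unfold3, act3, Matrix.mul_apply]

lemma unfold1_sub (A B : Fin I₁ → Fin I₂ → Fin I₃ → ℝ) :
    unfold1 (A - B) = unfold1 A - unfold1 B := by
  ext i j; simp [unfold1]

lemma unfold2_sub (A B : Fin I₁ → Fin I₂ → Fin I₃ → ℝ) :
    unfold2 (A - B) = unfold2 A - unfold2 B := by
  ext i j; simp [unfold2]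

lemma unfold3_sub (A B : Fin I₁ → Fin I₂ → Fin I₃ → ℝ) :
    unfold3 (A - B) = unfold3 A - unfold3 B := by
  ext i j; simp [unfold3]

lemma projT {m R : ℕ} (U : Matrix (Fin m) (Fin R) ℝ) : (U * Uᵀ)ᵀ = U * Uᵀ := by
  rw [Matrix.transpose_mul, Matrix.transpose_transpose]

lemma projI {m R : ℕ} (U : Matrix (Fin m) (Fin R) ℝ) (h : Uᵀ * U = 1) :
    (U * Uᵀ) * (U * Uᵀ) = U * Uᵀ := by
  rw [Matrix.mul_assoc, ← Matrix.mul_assoc Uᵀ U Uᵀ, h, Matrix.one_mul]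

lemma tstep1 (P : Matrix (Fin I₁) (Fin I₁) ℝ) (hs : Pᵀ = P) (hi : P * P = P)
    (X B : Fin I₁ → Fin I₂ → Fin I₃ → ℝ) :
    nsq3 (X - act1 P B) ≤ nsq3 (X - act1 P X) + nsq3 (X - B) := by
  rw [nsq3_unfold1 (X - act1 P B), nsq3_unfold1 (X - act1 P X), nsq3_unfold1 (X - B),
    unfold1_sub, unfold1_sub, unfold1_sub, unfold1_act1, unfold1_act1]
  exact mstep P hs hi (unfold1 X) (unfold1 B)

lemma tstep2 (P : Matrix (Fin I₂) (Fin I₂) ℝ) (hs : Pᵀ = P) (hi : P * P = P)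
    (X B : Fin I₁ → Fin I₂ → Fin I₃ → ℝ) :
    nsq3 (X - act2 P B) ≤ nsq3 (X - act2 P X) + nsq3 (X - B) := by
  rw [nsq3_unfold2 (X - act2 P B), nsq3_unfold2 (X - act2 P X), nsq3_unfold2 (X - B),
    unfold2_sub, unfold2_sub, unfold2_sub, unfold2_act2, unfold2_act2]
  exact mstep P hs hi (unfold2 X) (unfold2 B)

lemma tstep3 (P : Matrix (Fin I₃) (Fin I₃) ℝ) (hs : Pᵀ = P) (hi : P * P = P)
    (X B : Fin I₁ → Fin I₂ → Fin I₃ → ℝ) :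
    nsq3 (X - act3 P B) ≤ nsq3 (X - act3 P X) + nsq3 (X - B) := by
  rw [nsq3_unfold3 (X - act3 P B), nsq3_unfold3 (X - act3 P X), nsq3_unfold3 (X - B),
    unfold3_sub, unfold3_sub, unfold3_sub, unfold3_act3, unfold3_act3]
  exact mstep P hs hi (unfold3 X) (unfold3 B)

lemma tail1 {R : ℕ} (X : Fin I₁ → Fin I₂ → Fin I₃ → ℝ) (U : Matrix (Fin I₁) (Fin R) ℝ)
    (hb : ∑ i, ∑ j, (unfold1 X - U * Uᵀ * unfold1 X) i j ^ 2 ≤ tailEnergy (unfold1 X) R) :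
    nsq3 (X - act1 (U * Uᵀ) X) ≤ tailEnergy (unfold1 X) R := by
  rw [nsq3_unfold1, unfold1_sub, unfold1_act1]
  exact hb

lemma tail2 {R : ℕ} (X : Fin I₁ → Fin I₂ → Fin I₃ → ℝ) (U : Matrix (Fin I₂) (Fin R) ℝ)
    (hb : ∑ i, ∑ j, (unfold2 X - U * Uᵀ * unfold2 X) i j ^ 2 ≤ tailEnergy (unfold2 X) R) :
    nsq3 (X - act2 (U * Uᵀ) X) ≤ tailEnergy (unfold2 X) R := by
  rw [nsq3_unfold2, unfold2_sub, unfold2_act2]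
  exact hb

lemma tail3 {R : ℕ} (X : Fin I₁ → Fin I₂ → Fin I₃ → ℝ) (U : Matrix (Fin I₃) (Fin R) ℝ)
    (hb : ∑ i, ∑ j, (unfold3 X - U * Uᵀ * unfold3 X) i j ^ 2 ≤ tailEnergy (unfold3 X) R) :
    nsq3 (X - act3 (U * Uᵀ) X) ≤ tailEnergy (unfold3 X) R := by
  rw [nsq3_unfold3, unfold3_sub, unfold3_act3]
  exact hb

end FCTNAux


open FCTNAux

/-- **Approximation error bound for the third-order FCTN decomposition.**
For each pair `n₁ < n₂`, `X_{<n₁n₂>}` denotes whichever of the unfoldings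
`X_{<n₁>}`, `X_{<n₂>}` has the smaller rank.  If
`R_{n₁,n₂} ≤ min(rank(X_{<n₁>}), rank(X_{<n₂>}))` for all pairs, then there is
a third-order FCTN decomposition `E` with ranks `(R₁₂, R₁₃, R₂₃)` such that
`‖X − E‖_F² ≤ Σ_{n₁<n₂} Σ_{i=R_{n₁,n₂}+1}^{rank(X_{<n₁n₂>})} σ_i(X_{<n₁n₂>})²`. -/
theorem fctn_error_bound (I₁ I₂ I₃ R₁₂ R₁₃ R₂₃ : ℕ)
    (X : Fin I₁ → Fin I₂ → Fin I₃ → ℝ)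
    (h₁₂ : R₁₂ ≤ min (unfold1 X).rank (unfold2 X).rank)
    (h₁₃ : R₁₃ ≤ min (unfold1 X).rank (unfold3 X).rank)
    (h₂₃ : R₂₃ ≤ min (unfold2 X).rank (unfold3 X).rank) :
    ∃ (F₁ : Fin I₁ → Fin R₁₂ → Fin R₁₃ → ℝ) (F₂ : Fin R₁₂ → Fin I₂ → Fin R₂₃ → ℝ)
      (F₃ : Fin R₁₃ → Fin R₂₃ → Fin I₃ → ℝ),
      ∑ i₁, ∑ i₂, ∑ i₃,
        (X i₁ i₂ i₃ -
          ∑ r₁₂, ∑ r₁₃, ∑ r₂₃, F₁ i₁ r₁₂ r₁₃ * F₂ r₁₂ i₂ r₂₃ * F₃ r₁₃ r₂₃ i₃) ^ 2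
      ≤ (if (unfold1 X).rank ≤ (unfold2 X).rank then tailEnergy (unfold1 X) R₁₂
           else tailEnergy (unfold2 X) R₁₂) +
        (if (unfold1 X).rank ≤ (unfold3 X).rank then tailEnergy (unfold1 X) R₁₃
           else tailEnergy (unfold3 X) R₁₃) +
        (if (unfold2 X).rank ≤ (unfold3 X).rank then tailEnergy (unfold2 X) R₂₃
           else tailEnergy (unfold3 X) R₂₃) := by
  classical
  have hr112 : R₁₂ ≤ (unfold1 X).rank := le_trans h₁₂ (min_le_left _ _)
  have hr212 : R₁₂ ≤ (unfold2 X).rank := le_trans h₁₂ (min_le_right _ _)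
  have hr113 : R₁₃ ≤ (unfold1 X).rank := le_trans h₁₃ (min_le_left _ _)
  have hr313 : R₁₃ ≤ (unfold3 X).rank := le_trans h₁₃ (min_le_right _ _)
  have hr223 : R₂₃ ≤ (unfold2 X).rank := le_trans h₂₃ (min_le_left _ _)
  have hr323 : R₂₃ ≤ (unfold3 X).rank := le_trans h₂₃ (min_le_right _ _)
  by_cases c1 : (unfold1 X).rank ≤ (unfold2 X).rank <;>
    by_cases c2 : (unfold1 X).rank ≤ (unfold3 X).rank <;>
      by_cases c3 : (unfold2 X).rank ≤ (unfold3 X).rank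
  · -- TTT : k=1, m=2, n=3
    rw [if_pos c1, if_pos c2, if_pos c3]
    obtain ⟨Up, hUp, hbp⟩ := exists_trunc (unfold1 X) R₁₂ hr112
    obtain ⟨Uq, hUq, hbq⟩ := exists_trunc (unfold1 X) R₁₃ hr113
    obtain ⟨Ud, hUd, hbd⟩ := exists_trunc (unfold2 X) R₂₃ hr223
    refine ⟨fun i₁ a c => Up i₁ a * ∑ j, Up j a * Uq j c,
      fun _ i₂ b => Ud i₂ b,
      fun c b i₃ => ∑ t, ∑ jm, Uq t c * Ud jm b * X t jm i₃, ?_⟩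
    have hkey : ∀ (i₁ : Fin I₁) (i₂ : Fin I₂) (i₃ : Fin I₃),
        (∑ a : Fin R₁₂, ∑ c : Fin R₁₃, ∑ b : Fin R₂₃,
          (Up i₁ a * ∑ j, Up j a * Uq j c) * Ud i₂ b *
            (∑ t, ∑ jm, Uq t c * Ud jm b * X t jm i₃))
        = act1 (Up * Upᵀ) (act1 (Uq * Uqᵀ) (act2 (Ud * Udᵀ) X)) i₁ i₂ i₃ := by
      intro i₁ i₂ i₃
      rw [← fctn_core Up Uq Ud X i₁ i₂ i₃]
      simp only [act1, act2, Matrix.mul_apply, Matrix.transpose_apply]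
    have hgl : (∑ i₁, ∑ i₂, ∑ i₃, (X i₁ i₂ i₃ -
          ∑ a : Fin R₁₂, ∑ c : Fin R₁₃, ∑ b : Fin R₂₃,
          (Up i₁ a * ∑ j, Up j a * Uq j c) * Ud i₂ b *
            (∑ t, ∑ jm, Uq t c * Ud jm b * X t jm i₃)) ^ 2)
        = nsq3 (X - act1 (Up * Upᵀ) (act1 (Uq * Uqᵀ) (act2 (Ud * Udᵀ) X))) := by
      unfold nsq3
      refine Finset.sum_congr rfl fun i₁ _ => Finset.sum_congr rfl fun i₂ _ =>
        Finset.sum_congr rfl fun i₃ _ => ?_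
      rw [hkey i₁ i₂ i₃]
      simp [Pi.sub_apply]
    rw [hgl]
    have hb1 := tail1 X Up hbp
    have hb2 := tail1 X Uq hbq
    have hb3 := tail2 X Ud hbd
    have step1 := tstep1 (Up * Upᵀ) (projT Up) (projI Up hUp) X
      (act1 (Uq * Uqᵀ) (act2 (Ud * Udᵀ) X))
    have step2 := tstep1 (Uq * Uqᵀ) (projT Uq) (projI Uq hUq) X (act2 (Ud * Udᵀ) X)
    linarith
  · -- TTF : k=1, m=3
    rw [if_pos c1, if_pos c2, if_neg c3]
    obtain ⟨Up, hUp, hbp⟩ := exists_trunc (unfold1 X) R₁₃ hr113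
    obtain ⟨Uq, hUq, hbq⟩ := exists_trunc (unfold1 X) R₁₂ hr112
    obtain ⟨Ud, hUd, hbd⟩ := exists_trunc (unfold3 X) R₂₃ hr323
    refine ⟨fun i₁ c a => Up i₁ a * ∑ j, Up j a * Uq j c, fun c i₂ b => ∑ t, ∑ jm, Uq t c * Ud jm b * X t i₂ jm, fun _ b i₃ => Ud i₃ b, ?_⟩
    have hkey : ∀ (i₁ : Fin I₁) (i₂ : Fin I₂) (i₃ : Fin I₃),
        (∑ c : Fin R₁₂, ∑ a : Fin R₁₃, ∑ b : Fin R₂₃,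
          (Up i₁ a * ∑ j, Up j a * Uq j c) * (∑ t, ∑ jm, Uq t c * Ud jm b * X t i₂ jm) * Ud i₃ b)
        = act1 (Up * Upᵀ) (act1 (Uq * Uqᵀ) (act3 (Ud * Udᵀ) X)) i₁ i₂ i₃ := by
      intro i₁ i₂ i₃
      have h : (∑ j, (∑ a, Up i₁ a * Up j a) * ∑ t, (∑ c, Uq j c * Uq t c) *
            ∑ jm, (∑ b, Ud i₃ b * Ud jm b) * X t i₂ jm)
          = ∑ a, ∑ c, ∑ b, (Up i₁ a * ∑ j, Up j a * Uq j c) * Ud i₃ b *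
            (∑ t, ∑ jm, Uq t c * Ud jm b * X t i₂ jm) :=
        fctn_core Up Uq Ud (fun t jm inn => X t inn jm) i₁ i₃ i₂
      calc (∑ c : Fin R₁₂, ∑ a : Fin R₁₃, ∑ b : Fin R₂₃,
          (Up i₁ a * ∑ j, Up j a * Uq j c) * (∑ t, ∑ jm, Uq t c * Ud jm b * X t i₂ jm) * Ud i₃ b)
          = ∑ a, ∑ c, ∑ b, (Up i₁ a * ∑ j, Up j a * Uq j c) * (∑ t, ∑ jm, Uq t c * Ud jm b * X t i₂ jm) * Ud i₃ b := sum3_yxz fun a c b => (Up i₁ a * ∑ j, Up j a * Uq j c) * (∑ t, ∑ jm, Uq t c * Ud jm b * X t i₂ jm) * Ud i₃ b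
        _ = ∑ a, ∑ c, ∑ b, (Up i₁ a * ∑ j, Up j a * Uq j c) * Ud i₃ b *
            (∑ t, ∑ jm, Uq t c * Ud jm b * X t i₂ jm) := by
            refine Finset.sum_congr rfl fun a _ => Finset.sum_congr rfl fun c _ =>
              Finset.sum_congr rfl fun b _ => ?_
            ring
        _ = _ := by
            rw [← h]
            simp only [act1, act2, act3, Matrix.mul_apply, Matrix.transpose_apply]
    have hgl : (∑ i₁, ∑ i₂, ∑ i₃, (X i₁ i₂ i₃ -
          (∑ c : Fin R₁₂, ∑ a : Fin R₁₃, ∑ b : Fin R₂₃,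
          (Up i₁ a * ∑ j, Up j a * Uq j c) * (∑ t, ∑ jm, Uq t c * Ud jm b * X t i₂ jm) * Ud i₃ b)) ^ 2)
        = nsq3 (X - act1 (Up * Upᵀ) (act1 (Uq * Uqᵀ) (act3 (Ud * Udᵀ) X))) := by
      unfold nsq3
      refine Finset.sum_congr rfl fun i₁ _ => Finset.sum_congr rfl fun i₂ _ =>
        Finset.sum_congr rfl fun i₃ _ => ?_
      rw [hkey i₁ i₂ i₃]
      simp [Pi.sub_apply]
    rw [hgl]
    have hb1 := tail1 X Up hbp
    have hb2 := tail1 X Uq hbq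
    have hb3 := tail3 X Ud hbd
    have step1 := tstep1 (Up * Upᵀ) (projT Up) (projI Up hUp) X
      (act1 (Uq * Uqᵀ) (act3 (Ud * Udᵀ) X))
    have step2 := tstep1 (Uq * Uqᵀ) (projT Uq) (projI Uq hUq) X (act3 (Ud * Udᵀ) X)
    linarith
  · -- impossible
    exfalso
    omega
  · -- TFF : k=3, m=1
    rw [if_pos c1, if_neg c2, if_neg c3]
    obtain ⟨Up, hUp, hbp⟩ := exists_trunc (unfold3 X) R₁₃ hr313
    obtain ⟨Uq, hUq, hbq⟩ := exists_trunc (unfold3 X) R₂₃ hr323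
    obtain ⟨Ud, hUd, hbd⟩ := exists_trunc (unfold1 X) R₁₂ hr112
    refine ⟨fun i₁ b _ => Ud i₁ b, fun b i₂ c => ∑ t, ∑ jm, Uq t c * Ud jm b * X jm i₂ t, fun a c i₃ => Up i₃ a * ∑ j, Up j a * Uq j c, ?_⟩
    have hkey : ∀ (i₁ : Fin I₁) (i₂ : Fin I₂) (i₃ : Fin I₃),
        (∑ b : Fin R₁₂, ∑ a : Fin R₁₃, ∑ c : Fin R₂₃,
          Ud i₁ b * (∑ t, ∑ jm, Uq t c * Ud jm b * X jm i₂ t) * (Up i₃ a * ∑ j, Up j a * Uq j c))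
        = act3 (Up * Upᵀ) (act3 (Uq * Uqᵀ) (act1 (Ud * Udᵀ) X)) i₁ i₂ i₃ := by
      intro i₁ i₂ i₃
      have h : (∑ j, (∑ a, Up i₃ a * Up j a) * ∑ t, (∑ c, Uq j c * Uq t c) *
            ∑ jm, (∑ b, Ud i₁ b * Ud jm b) * X jm i₂ t)
          = ∑ a, ∑ c, ∑ b, (Up i₃ a * ∑ j, Up j a * Uq j c) * Ud i₁ b *
            (∑ t, ∑ jm, Uq t c * Ud jm b * X jm i₂ t) :=
        fctn_core Up Uq Ud (fun t jm inn => X jm inn t) i₃ i₁ i₂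
      calc (∑ b : Fin R₁₂, ∑ a : Fin R₁₃, ∑ c : Fin R₂₃,
          Ud i₁ b * (∑ t, ∑ jm, Uq t c * Ud jm b * X jm i₂ t) * (Up i₃ a * ∑ j, Up j a * Uq j c))
          = ∑ a, ∑ c, ∑ b, Ud i₁ b * (∑ t, ∑ jm, Uq t c * Ud jm b * X jm i₂ t) * (Up i₃ a * ∑ j, Up j a * Uq j c) := sum3_zxy fun a c b => Ud i₁ b * (∑ t, ∑ jm, Uq t c * Ud jm b * X jm i₂ t) * (Up i₃ a * ∑ j, Up j a * Uq j c)
        _ = ∑ a, ∑ c, ∑ b, (Up i₃ a * ∑ j, Up j a * Uq j c) * Ud i₁ b *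
            (∑ t, ∑ jm, Uq t c * Ud jm b * X jm i₂ t) := by
            refine Finset.sum_congr rfl fun a _ => Finset.sum_congr rfl fun c _ =>
              Finset.sum_congr rfl fun b _ => ?_
            ring
        _ = _ := by
            rw [← h]
            simp only [act1, act2, act3, Matrix.mul_apply, Matrix.transpose_apply]
    have hgl : (∑ i₁, ∑ i₂, ∑ i₃, (X i₁ i₂ i₃ -
          (∑ b : Fin R₁₂, ∑ a : Fin R₁₃, ∑ c : Fin R₂₃,
          Ud i₁ b * (∑ t, ∑ jm, Uq t c * Ud jm b * X jm i₂ t) * (Up i₃ a * ∑ j, Up j a * Uq j c))) ^ 2)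
        = nsq3 (X - act3 (Up * Upᵀ) (act3 (Uq * Uqᵀ) (act1 (Ud * Udᵀ) X))) := by
      unfold nsq3
      refine Finset.sum_congr rfl fun i₁ _ => Finset.sum_congr rfl fun i₂ _ =>
        Finset.sum_congr rfl fun i₃ _ => ?_
      rw [hkey i₁ i₂ i₃]
      simp [Pi.sub_apply]
    rw [hgl]
    have hb1 := tail3 X Up hbp
    have hb2 := tail3 X Uq hbq
    have hb3 := tail1 X Ud hbd
    have step1 := tstep3 (Up * Upᵀ) (projT Up) (projI Up hUp) X
      (act3 (Uq * Uqᵀ) (act1 (Ud * Udᵀ) X))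
    have step2 := tstep3 (Uq * Uqᵀ) (projT Uq) (projI Uq hUq) X (act1 (Ud * Udᵀ) X)
    linarith
  · -- FTT : k=2, m=1
    rw [if_neg c1, if_pos c2, if_pos c3]
    obtain ⟨Up, hUp, hbp⟩ := exists_trunc (unfold2 X) R₁₂ hr212
    obtain ⟨Uq, hUq, hbq⟩ := exists_trunc (unfold2 X) R₂₃ hr223
    obtain ⟨Ud, hUd, hbd⟩ := exists_trunc (unfold1 X) R₁₃ hr113
    refine ⟨fun i₁ _ b => Ud i₁ b, fun a i₂ c => Up i₂ a * ∑ j, Up j a * Uq j c, fun b c i₃ => ∑ t, ∑ jm, Uq t c * Ud jm b * X jm t i₃, ?_⟩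
    have hkey : ∀ (i₁ : Fin I₁) (i₂ : Fin I₂) (i₃ : Fin I₃),
        (∑ a : Fin R₁₂, ∑ b : Fin R₁₃, ∑ c : Fin R₂₃,
          Ud i₁ b * (Up i₂ a * ∑ j, Up j a * Uq j c) * (∑ t, ∑ jm, Uq t c * Ud jm b * X jm t i₃))
        = act2 (Up * Upᵀ) (act2 (Uq * Uqᵀ) (act1 (Ud * Udᵀ) X)) i₁ i₂ i₃ := by
      intro i₁ i₂ i₃
      have h : (∑ j, (∑ a, Up i₂ a * Up j a) * ∑ t, (∑ c, Uq j c * Uq t c) *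
            ∑ jm, (∑ b, Ud i₁ b * Ud jm b) * X jm t i₃)
          = ∑ a, ∑ c, ∑ b, (Up i₂ a * ∑ j, Up j a * Uq j c) * Ud i₁ b *
            (∑ t, ∑ jm, Uq t c * Ud jm b * X jm t i₃) :=
        fctn_core Up Uq Ud (fun t jm inn => X jm t inn) i₂ i₁ i₃
      calc (∑ a : Fin R₁₂, ∑ b : Fin R₁₃, ∑ c : Fin R₂₃,
          Ud i₁ b * (Up i₂ a * ∑ j, Up j a * Uq j c) * (∑ t, ∑ jm, Uq t c * Ud jm b * X jm t i₃))
          = ∑ a, ∑ c, ∑ b, Ud i₁ b * (Up i₂ a * ∑ j, Up j a * Uq j c) * (∑ t, ∑ jm, Uq t c * Ud jm b * X jm t i₃) := sum3_xzy fun a c b => Ud i₁ b * (Up i₂ a * ∑ j, Up j a * Uq j c) * (∑ t, ∑ jm, Uq t c * Ud jm b * X jm t i₃)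
        _ = ∑ a, ∑ c, ∑ b, (Up i₂ a * ∑ j, Up j a * Uq j c) * Ud i₁ b *
            (∑ t, ∑ jm, Uq t c * Ud jm b * X jm t i₃) := by
            refine Finset.sum_congr rfl fun a _ => Finset.sum_congr rfl fun c _ =>
              Finset.sum_congr rfl fun b _ => ?_
            ring
        _ = _ := by
            rw [← h]
            simp only [act1, act2, act3, Matrix.mul_apply, Matrix.transpose_apply]
    have hgl : (∑ i₁, ∑ i₂, ∑ i₃, (X i₁ i₂ i₃ -
          (∑ a : Fin R₁₂, ∑ b : Fin R₁₃, ∑ c : Fin R₂₃,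
          Ud i₁ b * (Up i₂ a * ∑ j, Up j a * Uq j c) * (∑ t, ∑ jm, Uq t c * Ud jm b * X jm t i₃))) ^ 2)
        = nsq3 (X - act2 (Up * Upᵀ) (act2 (Uq * Uqᵀ) (act1 (Ud * Udᵀ) X))) := by
      unfold nsq3
      refine Finset.sum_congr rfl fun i₁ _ => Finset.sum_congr rfl fun i₂ _ =>
        Finset.sum_congr rfl fun i₃ _ => ?_
      rw [hkey i₁ i₂ i₃]
      simp [Pi.sub_apply]
    rw [hgl]
    have hb1 := tail2 X Up hbp
    have hb2 := tail2 X Uq hbq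
    have hb3 := tail1 X Ud hbd
    have step1 := tstep2 (Up * Upᵀ) (projT Up) (projI Up hUp) X
      (act2 (Uq * Uqᵀ) (act1 (Ud * Udᵀ) X))
    have step2 := tstep2 (Uq * Uqᵀ) (projT Uq) (projI Uq hUq) X (act1 (Ud * Udᵀ) X)
    linarith
  · -- impossible
    exfalso
    omega
  · -- FFT : k=2, m=3
    rw [if_neg c1, if_neg c2, if_pos c3]
    obtain ⟨Up, hUp, hbp⟩ := exists_trunc (unfold2 X) R₂₃ hr223
    obtain ⟨Uq, hUq, hbq⟩ := exists_trunc (unfold2 X) R₁₂ hr212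
    obtain ⟨Ud, hUd, hbd⟩ := exists_trunc (unfold3 X) R₁₃ hr313
    refine ⟨fun i₁ c b => ∑ t, ∑ jm, Uq t c * Ud jm b * X i₁ t jm, fun c i₂ a => Up i₂ a * ∑ j, Up j a * Uq j c, fun b _ i₃ => Ud i₃ b, ?_⟩
    have hkey : ∀ (i₁ : Fin I₁) (i₂ : Fin I₂) (i₃ : Fin I₃),
        (∑ c : Fin R₁₂, ∑ b : Fin R₁₃, ∑ a : Fin R₂₃,
          (∑ t, ∑ jm, Uq t c * Ud jm b * X i₁ t jm) * (Up i₂ a * ∑ j, Up j a * Uq j c) * Ud i₃ b)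
        = act2 (Up * Upᵀ) (act2 (Uq * Uqᵀ) (act3 (Ud * Udᵀ) X)) i₁ i₂ i₃ := by
      intro i₁ i₂ i₃
      have h : (∑ j, (∑ a, Up i₂ a * Up j a) * ∑ t, (∑ c, Uq j c * Uq t c) *
            ∑ jm, (∑ b, Ud i₃ b * Ud jm b) * X i₁ t jm)
          = ∑ a, ∑ c, ∑ b, (Up i₂ a * ∑ j, Up j a * Uq j c) * Ud i₃ b *
            (∑ t, ∑ jm, Uq t c * Ud jm b * X i₁ t jm) :=
        fctn_core Up Uq Ud (fun t jm inn => X inn t jm) i₂ i₃ i₁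
      calc (∑ c : Fin R₁₂, ∑ b : Fin R₁₃, ∑ a : Fin R₂₃,
          (∑ t, ∑ jm, Uq t c * Ud jm b * X i₁ t jm) * (Up i₂ a * ∑ j, Up j a * Uq j c) * Ud i₃ b)
          = ∑ a, ∑ c, ∑ b, (∑ t, ∑ jm, Uq t c * Ud jm b * X i₁ t jm) * (Up i₂ a * ∑ j, Up j a * Uq j c) * Ud i₃ b := sum3_yzx fun a c b => (∑ t, ∑ jm, Uq t c * Ud jm b * X i₁ t jm) * (Up i₂ a * ∑ j, Up j a * Uq j c) * Ud i₃ b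
        _ = ∑ a, ∑ c, ∑ b, (Up i₂ a * ∑ j, Up j a * Uq j c) * Ud i₃ b *
            (∑ t, ∑ jm, Uq t c * Ud jm b * X i₁ t jm) := by
            refine Finset.sum_congr rfl fun a _ => Finset.sum_congr rfl fun c _ =>
              Finset.sum_congr rfl fun b _ => ?_
            ring
        _ = _ := by
            rw [← h]
            simp only [act1, act2, act3, Matrix.mul_apply, Matrix.transpose_apply]
    have hgl : (∑ i₁, ∑ i₂, ∑ i₃, (X i₁ i₂ i₃ -
          (∑ c : Fin R₁₂, ∑ b : Fin R₁₃, ∑ a : Fin R₂₃,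
          (∑ t, ∑ jm, Uq t c * Ud jm b * X i₁ t jm) * (Up i₂ a * ∑ j, Up j a * Uq j c) * Ud i₃ b)) ^ 2)
        = nsq3 (X - act2 (Up * Upᵀ) (act2 (Uq * Uqᵀ) (act3 (Ud * Udᵀ) X))) := by
      unfold nsq3
      refine Finset.sum_congr rfl fun i₁ _ => Finset.sum_congr rfl fun i₂ _ =>
        Finset.sum_congr rfl fun i₃ _ => ?_
      rw [hkey i₁ i₂ i₃]
      simp [Pi.sub_apply]
    rw [hgl]
    have hb1 := tail2 X Up hbp
    have hb2 := tail2 X Uq hbq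
    have hb3 := tail3 X Ud hbd
    have step1 := tstep2 (Up * Upᵀ) (projT Up) (projI Up hUp) X
      (act2 (Uq * Uqᵀ) (act3 (Ud * Udᵀ) X))
    have step2 := tstep2 (Uq * Uqᵀ) (projT Uq) (projI Uq hUq) X (act3 (Ud * Udᵀ) X)
    linarith
  · -- FFF : k=3, m=2
    rw [if_neg c1, if_neg c2, if_neg c3]
    obtain ⟨Up, hUp, hbp⟩ := exists_trunc (unfold3 X) R₂₃ hr323
    obtain ⟨Uq, hUq, hbq⟩ := exists_trunc (unfold3 X) R₁₃ hr313
    obtain ⟨Ud, hUd, hbd⟩ := exists_trunc (unfold2 X) R₁₂ hr212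
    refine ⟨fun i₁ b c => ∑ t, ∑ jm, Uq t c * Ud jm b * X i₁ jm t, fun b i₂ _ => Ud i₂ b, fun c a i₃ => Up i₃ a * ∑ j, Up j a * Uq j c, ?_⟩
    have hkey : ∀ (i₁ : Fin I₁) (i₂ : Fin I₂) (i₃ : Fin I₃),
        (∑ b : Fin R₁₂, ∑ c : Fin R₁₃, ∑ a : Fin R₂₃,
          (∑ t, ∑ jm, Uq t c * Ud jm b * X i₁ jm t) * Ud i₂ b * (Up i₃ a * ∑ j, Up j a * Uq j c))
        = act3 (Up * Upᵀ) (act3 (Uq * Uqᵀ) (act2 (Ud * Udᵀ) X)) i₁ i₂ i₃ := by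
      intro i₁ i₂ i₃
      have h : (∑ j, (∑ a, Up i₃ a * Up j a) * ∑ t, (∑ c, Uq j c * Uq t c) *
            ∑ jm, (∑ b, Ud i₂ b * Ud jm b) * X i₁ jm t)
          = ∑ a, ∑ c, ∑ b, (Up i₃ a * ∑ j, Up j a * Uq j c) * Ud i₂ b *
            (∑ t, ∑ jm, Uq t c * Ud jm b * X i₁ jm t) :=
        fctn_core Up Uq Ud (fun t jm inn => X inn jm t) i₃ i₂ i₁
      calc (∑ b : Fin R₁₂, ∑ c : Fin R₁₃, ∑ a : Fin R₂₃,
          (∑ t, ∑ jm, Uq t c * Ud jm b * X i₁ jm t) * Ud i₂ b * (Up i₃ a * ∑ j, Up j a * Uq j c))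
          = ∑ a, ∑ c, ∑ b, (∑ t, ∑ jm, Uq t c * Ud jm b * X i₁ jm t) * Ud i₂ b * (Up i₃ a * ∑ j, Up j a * Uq j c) := sum3_zyx fun a c b => (∑ t, ∑ jm, Uq t c * Ud jm b * X i₁ jm t) * Ud i₂ b * (Up i₃ a * ∑ j, Up j a * Uq j c)
        _ = ∑ a, ∑ c, ∑ b, (Up i₃ a * ∑ j, Up j a * Uq j c) * Ud i₂ b *
            (∑ t, ∑ jm, Uq t c * Ud jm b * X i₁ jm t) := by
            refine Finset.sum_congr rfl fun a _ => Finset.sum_congr rfl fun c _ =>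
              Finset.sum_congr rfl fun b _ => ?_
            ring
        _ = _ := by
            rw [← h]
            simp only [act1, act2, act3, Matrix.mul_apply, Matrix.transpose_apply]
    have hgl : (∑ i₁, ∑ i₂, ∑ i₃, (X i₁ i₂ i₃ -
          (∑ b : Fin R₁₂, ∑ c : Fin R₁₃, ∑ a : Fin R₂₃,
          (∑ t, ∑ jm, Uq t c * Ud jm b * X i₁ jm t) * Ud i₂ b * (Up i₃ a * ∑ j, Up j a * Uq j c))) ^ 2)
        = nsq3 (X - act3 (Up * Upᵀ) (act3 (Uq * Uqᵀ) (act2 (Ud * Udᵀ) X))) := by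
      unfold nsq3
      refine Finset.sum_congr rfl fun i₁ _ => Finset.sum_congr rfl fun i₂ _ =>
        Finset.sum_congr rfl fun i₃ _ => ?_
      rw [hkey i₁ i₂ i₃]
      simp [Pi.sub_apply]
    rw [hgl]
    have hb1 := tail3 X Up hbp
    have hb2 := tail3 X Uq hbq
    have hb3 := tail2 X Ud hbd
    have step1 := tstep3 (Up * Upᵀ) (projT Up) (projI Up hUp) X
      (act3 (Uq * Uqᵀ) (act2 (Ud * Udᵀ) X))
    have step2 := tstep3 (Uq * Uqᵀ) (projT Uq) (projI Uq hUq) X (act2 (Ud * Udᵀ) X)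
    linarith
end

section
/- Let X be a third-order real tensor of size I₁ × I₂ × I₃, let ℓ ≤ rank(X_{<3>}), and let L ∈ ℝ^{I₃ × ℓ} be a matrix with orthonormal columns equal to the top-ℓ left singular vectors of X_{<3>}. Set X̂ = X ×₃ Lᵀ ∈ ℝ^{I₁ × I₂ × ℓ} and let R be a natural number with R ≤ rank(X̂^{(n)}) for all n = 1, …, ℓ, where X̂^{(n)} denotes the n-th frontal slice of X̂. Then there exist latent factor tensors Â ∈ ℝ^{I₁ × R × ℓ} and B̂ ∈ ℝ^{R × I₂ × ℓ} such that the transform-based tensor factorization approximation E = (Â △ B̂) ×₃ L satisfies ‖X − E‖_F² ≤ Σ_{n=1}^{ℓ} Σ_{i=R+1}^{rank(X̂^{(n)})} σ_i(X̂^{(n)})² + Σ_{i=ℓ+1}^{rank(X_{<3>})} σ_i(X_{<3>})², where σ_i(M) denotes the i-th largest singular value of a matrix M. -/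
open Matrix

namespace TFAux

lemma sval_sq {m k : ℕ} (M : Matrix (Fin m) (Fin k) ℝ) (i : ℕ) (h : i < k) :
    sval M i ^ 2 = (Matrix.isHermitian_conjTranspose_mul_self M).eigenvalues
      (Tuple.sort (fun j => -(Matrix.isHermitian_conjTranspose_mul_self M).eigenvalues j) ⟨i, h⟩) := by
  rw [sval, dif_pos h, Real.sq_sqrt (Matrix.eigenvalues_conjTranspose_mul_self_nonneg M _)]

lemma sorted_antitone {m k : ℕ} (M : Matrix (Fin m) (Fin k) ℝ) {a b : Fin k} (hab : a ≤ b) :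
    (Matrix.isHermitian_conjTranspose_mul_self M).eigenvalues
      (Tuple.sort (fun j => -(Matrix.isHermitian_conjTranspose_mul_self M).eigenvalues j) b)
    ≤ (Matrix.isHermitian_conjTranspose_mul_self M).eigenvalues
      (Tuple.sort (fun j => -(Matrix.isHermitian_conjTranspose_mul_self M).eigenvalues j) a) := by
  have := Tuple.monotone_sort
    (fun j => -(Matrix.isHermitian_conjTranspose_mul_self M).eigenvalues j) hab
  simpa using this

lemma sval_eq_zero {m k : ℕ} (M : Matrix (Fin m) (Fin k) ℝ) (i : ℕ) (h : M.rank ≤ i) :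
    sval M i = 0 := by
  rw [sval]
  split_ifs with hik
  · set hH := Matrix.isHermitian_conjTranspose_mul_self M with hHdef
    set s := Tuple.sort (fun j => -hH.eigenvalues j) with hs
    rw [Real.sqrt_eq_zero (Matrix.eigenvalues_conjTranspose_mul_self_nonneg M _)]
    by_contra hne
    have hpos : 0 < hH.eigenvalues (s ⟨i, hik⟩) :=
      lt_of_le_of_ne (Matrix.eigenvalues_conjTranspose_mul_self_nonneg M _) (Ne.symm hne)
    have hrank : M.rank = Fintype.card {c // hH.eigenvalues c ≠ 0} := by
      rw [← Matrix.rank_transpose_mul_self M]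
      exact hH.rank_eq_card_non_zero_eigs
    have hcard : Fintype.card {c // hH.eigenvalues c ≠ 0}
        = Fintype.card {j // hH.eigenvalues (s j) ≠ 0} :=
      (Fintype.card_congr (Equiv.subtypeEquiv s (fun j => Iff.rfl))).symm
    have hsub : Finset.Iic (⟨i, hik⟩ : Fin k) ⊆
        Finset.univ.filter (fun j => hH.eigenvalues (s j) ≠ 0) := by
      intro j hj
      simp only [Finset.mem_Iic] at hj
      refine Finset.mem_filter.2 ⟨Finset.mem_univ _, ?_⟩
      exact ne_of_gt (lt_of_lt_of_le hpos (sorted_antitone M hj))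
    have hcard2 : (Finset.Iic (⟨i, hik⟩ : Fin k)).card = i + 1 := by
      simp [Fin.card_Iic]
    have := Finset.card_le_card hsub
    rw [hcard2, ← Fintype.card_subtype, ← hcard, ← hrank] at this
    omega
  · rfl

/-- the tail sum over `Ico a k` equals the tail energy. -/
lemma ico_tail {m k : ℕ} (M : Matrix (Fin m) (Fin k) ℝ) (a : ℕ) (ha : a ≤ M.rank) :
    ∑ i ∈ Finset.Ico a k, sval M i ^ 2 = tailEnergy M a := by
  have hk : M.rank ≤ k := Matrix.rank_le_width M
  rw [← Finset.sum_Ico_consecutive _ ha hk, tailEnergy]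
  have : ∑ i ∈ Finset.Ico M.rank k, sval M i ^ 2 = 0 := by
    apply Finset.sum_eq_zero
    intro i hi
    rw [sval_eq_zero M i (Finset.mem_Ico.mp hi).1]
    ring
  rw [this, add_zero]

/-- generic core lemma -/
lemma core {m k : ℕ} (M : Matrix (Fin m) (Fin k) ℝ)
    (v : Fin k → Fin k → ℝ) (lam : Fin k → ℝ)
    (h_ortho : ∀ c d, ∑ j, v c j * v d j = if c = d then 1 else 0)
    (h_comp : ∀ t u, ∑ c, v c t * v c u = if t = u then 1 else 0)
    (h_eig : ∀ c t, ∑ u, (∑ i, M i t * M i u) * v c u = lam c * v c t)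
    (S : Finset (Fin k)) :
    ∑ i, ∑ j, (M i j - ∑ c ∈ S, (∑ t, M i t * v c t) * v c j) ^ 2
    = ∑ c ∈ Sᶜ, lam c := by
  set a : Fin m → Fin k → ℝ := fun i c => ∑ t, M i t * v c t with ha
  have h_asq : ∀ c, ∑ i, a i c ^ 2 = lam c := by
    intro c
    have step : ∑ i, a i c ^ 2 = ∑ t, v c t * ∑ u, (∑ i, M i t * M i u) * v c u := by
      simp only [ha, sq, Finset.sum_mul_sum, Finset.mul_sum, Finset.sum_mul]
      rw [Finset.sum_comm]
      refine Finset.sum_congr rfl fun t _ => ?_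
      rw [Finset.sum_comm]
      refine Finset.sum_congr rfl fun u _ => ?_
      exact Finset.sum_congr rfl fun i _ => by ring
    rw [step]
    simp only [h_eig]
    have : ∑ t, v c t * (lam c * v c t) = lam c * ∑ t, v c t * v c t := by
      rw [Finset.mul_sum]; exact Finset.sum_congr rfl fun t _ => by ring
    rw [this, h_ortho c c, if_pos rfl, mul_one]
  have h_rowsq : ∀ i, ∑ j, M i j ^ 2 = ∑ c, a i c ^ 2 := by
    intro i
    have step : ∑ c, a i c ^ 2 = ∑ t, ∑ u, (M i t * M i u) * ∑ c, v c t * v c u := by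
      simp only [ha, sq, Finset.sum_mul_sum, Finset.mul_sum, Finset.sum_mul]
      rw [Finset.sum_comm]
      refine Finset.sum_congr rfl fun t _ => ?_
      rw [Finset.sum_comm]
      refine Finset.sum_congr rfl fun u _ => ?_
      exact Finset.sum_congr rfl fun c _ => by ring
    rw [step]
    simp only [h_comp, mul_ite, mul_one, mul_zero]
    simp [sq, Finset.sum_ite_eq]
  have expand : ∀ i, ∑ j, (M i j - ∑ c ∈ S, a i c * v c j) ^ 2
      = ∑ j, M i j ^ 2 - ∑ c ∈ S, a i c ^ 2 := by
    intro i
    have middle : ∑ j, M i j * (∑ c ∈ S, a i c * v c j) = ∑ c ∈ S, a i c ^ 2 := by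
      simp only [Finset.mul_sum]
      rw [Finset.sum_comm]
      refine Finset.sum_congr rfl fun c hc => ?_
      have h1 : ∑ j, M i j * (a i c * v c j) = a i c * ∑ j, M i j * v c j := by
        rw [Finset.mul_sum]; exact Finset.sum_congr rfl fun j _ => by ring
      rw [h1, show (∑ j, M i j * v c j) = a i c from rfl, sq]
    have last : ∑ j, (∑ c ∈ S, a i c * v c j) ^ 2 = ∑ c ∈ S, a i c ^ 2 := by
      simp only [sq, Finset.sum_mul_sum]
      rw [Finset.sum_comm]
      have h2 : ∀ c ∈ S, ∑ j, ∑ d ∈ S, (a i c * v c j) * (a i d * v d j)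
          = a i c * a i c := by
        intro c hc
        rw [Finset.sum_comm]
        have h1 : ∀ d ∈ S, ∑ j, (a i c * v c j) * (a i d * v d j)
            = a i c * a i d * (if c = d then 1 else 0) := by
          intro d _
          rw [← h_ortho c d, Finset.mul_sum]
          exact Finset.sum_congr rfl fun j _ => by ring
        rw [Finset.sum_congr rfl h1]
        simp only [mul_ite, mul_one, mul_zero]
        rw [Finset.sum_ite_eq, if_pos hc]
      rw [Finset.sum_congr rfl h2]
    have h3 : ∀ j, (M i j - ∑ c ∈ S, a i c * v c j) ^ 2
        = M i j ^ 2 - 2 * (M i j * (∑ c ∈ S, a i c * v c j)) + (∑ c ∈ S, a i c * v c j) ^ 2 := by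
      intro j; ring
    rw [Finset.sum_congr rfl fun j _ => h3 j, Finset.sum_add_distrib, Finset.sum_sub_distrib,
      ← Finset.mul_sum, middle, last]
    ring
  rw [Finset.sum_congr rfl fun i _ => expand i, Finset.sum_sub_distrib]
  rw [Finset.sum_congr rfl fun i (_ : i ∈ Finset.univ) => h_rowsq i]
  rw [Finset.sum_comm]
  conv_lhs => rw [Finset.sum_comm (s := Finset.univ) (t := S)]
  rw [Finset.sum_congr rfl fun c (_ : c ∈ Finset.univ) => h_asq c,
    Finset.sum_congr rfl fun c (_ : c ∈ S) => h_asq c]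
  rw [← Finset.sum_compl_add_sum S lam]
  ring

end TFAux

namespace TFAux

/-- instantiation of the eigen data for `MᵀM`. -/
lemma eigen_data {m k : ℕ} (M : Matrix (Fin m) (Fin k) ℝ) :
    ∃ v : Fin k → Fin k → ℝ,
      (∀ c d, ∑ j, v c j * v d j = if c = d then 1 else 0) ∧
      (∀ t u, ∑ c, v c t * v c u = if t = u then 1 else 0) ∧
      (∀ c t, ∑ u, (∑ i, M i t * M i u) * v c u
        = (Matrix.isHermitian_conjTranspose_mul_self M).eigenvalues c * v c t) := by
  set hH := Matrix.isHermitian_conjTranspose_mul_self M with hHd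
  refine ⟨fun c j => hH.eigenvectorBasis c j, ?_, ?_, ?_⟩
  · intro c d
    have := orthonormal_iff_ite.mp hH.eigenvectorBasis.orthonormal c d
    simpa [PiLp.inner_apply, RCLike.inner_apply, conj_trivial, mul_comm] using this
  · intro t u
    have h_ortho : ∀ c d, ∑ j, hH.eigenvectorBasis c j * hH.eigenvectorBasis d j
        = if c = d then 1 else 0 := by
      intro c d
      have := orthonormal_iff_ite.mp hH.eigenvectorBasis.orthonormal c d
      simpa [PiLp.inner_apply, RCLike.inner_apply, conj_trivial, mul_comm] using this
    set V : Matrix (Fin k) (Fin k) ℝ := Matrix.of fun t c => hH.eigenvectorBasis c t with hV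
    have h1 : Vᵀ * V = 1 := by
      ext c d
      simp only [Matrix.mul_apply, Matrix.transpose_apply, hV, Matrix.of_apply, Matrix.one_apply]
      exact h_ortho c d
    have h2 : V * Vᵀ = 1 := mul_eq_one_comm.mp h1
    have := congrFun (congrFun h2 t) u
    simpa [Matrix.mul_apply, Matrix.transpose_apply, hV, Matrix.one_apply] using this
  · intro c t
    have := congrFun (hH.mulVec_eigenvectorBasis c) t
    simpa [Matrix.mulVec, dotProduct, Matrix.mul_apply,
      Matrix.conjTranspose_apply] using this

/-- best rank-R factorization error. -/
lemma approx {m k R : ℕ} (M : Matrix (Fin m) (Fin k) ℝ) (hR : R ≤ M.rank) :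
    ∃ (A : Fin m → Fin R → ℝ) (B : Fin R → Fin k → ℝ),
      ∑ i, ∑ j, (M i j - ∑ r, A i r * B r j) ^ 2 = tailEnergy M R := by
  obtain ⟨v, h_ortho, h_comp, h_eig⟩ := eigen_data M
  set hH := Matrix.isHermitian_conjTranspose_mul_self M with hHd
  set lam := hH.eigenvalues with hlam
  set s := Tuple.sort (fun j => -lam j) with hs
  have hk : M.rank ≤ k := Matrix.rank_le_width M
  have hRk : R ≤ k := hR.trans hk
  set e : Fin R → Fin k := fun r => s (Fin.castLE hRk r) with he
  have he_inj : Function.Injective e := fun a b hab => by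
    have := s.injective hab
    exact Fin.castLE_injective hRk this
  set S : Finset (Fin k) := Finset.image e Finset.univ with hS
  refine ⟨fun i r => ∑ t, M i t * v (e r) t, fun r j => v (e r) j, ?_⟩
  have hbij : ∀ i j, (∑ r : Fin R, (∑ t, M i t * v (e r) t) * v (e r) j)
      = ∑ c ∈ S, (∑ t, M i t * v c t) * v c j := by
    intro i j
    rw [hS, Finset.sum_image (fun x _ y _ h => he_inj h)]
  rw [Finset.sum_congr rfl fun i _ => Finset.sum_congr rfl fun j _ => by rw [hbij i j]]
  rw [core M v lam h_ortho h_comp h_eig S]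
  -- now  ∑ c ∈ Sᶜ, lam c = tailEnergy M R
  have hSc : Sᶜ = Finset.image s (Finset.univ.filter fun d : Fin k => R ≤ (d : ℕ)) := by
    ext c
    simp only [Finset.mem_compl, hS, Finset.mem_image, Finset.mem_univ, true_and,
      Finset.mem_filter]
    constructor
    · intro hc
      refine ⟨s.symm c, ?_, s.apply_symm_apply c⟩
      by_contra hlt
      push_neg at hlt
      exact hc ⟨⟨(s.symm c : ℕ), hlt⟩, by
        simp only [he]
        rw [show Fin.castLE hRk ⟨(s.symm c : ℕ), hlt⟩ = s.symm c from Fin.ext rfl]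
        exact s.apply_symm_apply c⟩
    · rintro ⟨d, hd, rfl⟩ ⟨r, hr⟩
      have : Fin.castLE hRk r = d := s.injective hr
      have : (r : ℕ) = (d : ℕ) := by rw [← this]; rfl
      omega
  rw [hSc, Finset.sum_image (fun x _ y _ h => s.injective h)]
  rw [← ico_tail M R hR]
  rcases Nat.eq_zero_or_pos k with hk0 | hk0
  · subst hk0
    rw [Finset.Ico_eq_empty (by omega), Finset.sum_empty]
    apply Finset.sum_eq_zero
    intro d _
    exact absurd d.isLt (by omega)
  refine Finset.sum_nbij' (i := fun d => (d : ℕ)) (j := fun i => ⟨i % k, Nat.mod_lt _ hk0⟩)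
    ?_ ?_ ?_ ?_ ?_
  · intro d hd
    simp only [Finset.mem_filter, Finset.mem_univ, true_and] at hd
    exact Finset.mem_Ico.mpr ⟨hd, d.isLt⟩
  · intro i hi
    have := Finset.mem_Ico.mp hi
    simp only [Finset.mem_filter, Finset.mem_univ, true_and]
    rw [Nat.mod_eq_of_lt this.2]
    exact this.1
  · intro d _
    exact Fin.ext (by simp [Nat.mod_eq_of_lt d.isLt])
  · intro i hi
    have := Finset.mem_Ico.mp hi
    simp [Nat.mod_eq_of_lt this.2]
  · intro d hd
    rw [sval_sq M (d : ℕ) d.isLt]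

end TFAux

namespace TFAux

lemma proj {m k l : ℕ} (M : Matrix (Fin m) (Fin k) ℝ) (L : Matrix (Fin m) (Fin l) ℝ)
    (hL1 : Lᵀ * L = 1)
    (hL2 : ∀ kk : Fin l, (M * Mᵀ) *ᵥ (fun j => L j kk)
      = (sval M (kk : ℕ) ^ 2) • fun j => L j kk)
    (hl : l ≤ M.rank) :
    ∑ i, ∑ p, (M i p - ∑ j : Fin l, (∑ t, M t p * L t j) * L i j) ^ 2 = tailEnergy M l := by
  have hL1e : ∀ j j' : Fin l, ∑ i, L i j * L i j' = if j = j' then 1 else 0 := by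
    intro j j'
    have := congrFun (congrFun hL1 j) j'
    simpa [Matrix.mul_apply, Matrix.transpose_apply, Matrix.one_apply] using this
  have hL2e : ∀ (j : Fin l) (t : Fin m),
      ∑ u, (∑ p, M t p * M u p) * L u j = sval M (j : ℕ) ^ 2 * L t j := by
    intro j t
    have := congrFun (hL2 j) t
    simpa [Matrix.mulVec, dotProduct, Matrix.mul_apply, Matrix.transpose_apply] using this
  set b : Fin l → Fin k → ℝ := fun j p => ∑ t, M t p * L t j with hb
  have hbsq : ∀ j : Fin l, ∑ p, b j p ^ 2 = sval M (j : ℕ) ^ 2 := by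
    intro j
    have step : ∑ p, b j p ^ 2 = ∑ t, L t j * ∑ u, (∑ p, M t p * M u p) * L u j := by
      simp only [hb, sq, Finset.sum_mul_sum, Finset.mul_sum, Finset.sum_mul]
      rw [Finset.sum_comm]
      refine Finset.sum_congr rfl fun t _ => ?_
      rw [Finset.sum_comm]
      refine Finset.sum_congr rfl fun u _ => ?_
      exact Finset.sum_congr rfl fun p _ => by ring
    rw [step]
    simp only [hL2e]
    have : ∑ t, L t j * (sval M (j : ℕ) ^ 2 * L t j)
        = sval M (j : ℕ) ^ 2 * ∑ t, L t j * L t j := by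
      rw [Finset.mul_sum]; exact Finset.sum_congr rfl fun t _ => by ring
    rw [this, hL1e j j, if_pos rfl, mul_one]
  set w : Fin m → Fin k → ℝ := fun i p => ∑ j : Fin l, b j p * L i j with hw
  have cross : ∑ i, ∑ p, M i p * w i p = ∑ j : Fin l, sval M (j : ℕ) ^ 2 := by
    have e1 : ∀ i, ∑ p, M i p * w i p = ∑ j : Fin l, ∑ p, (M i p * L i j) * b j p := by
      intro i
      simp only [hw, Finset.mul_sum]
      rw [Finset.sum_comm]
      exact Finset.sum_congr rfl fun j _ => Finset.sum_congr rfl fun p _ => by ring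
    rw [Finset.sum_congr rfl fun i (_ : i ∈ Finset.univ) => e1 i, Finset.sum_comm]
    refine Finset.sum_congr rfl fun j _ => ?_
    rw [Finset.sum_comm]
    have e2 : ∀ p, ∑ i, (M i p * L i j) * b j p = b j p ^ 2 := by
      intro p
      rw [← Finset.sum_mul, show (∑ i, M i p * L i j) = b j p from rfl, sq]
    rw [Finset.sum_congr rfl fun p _ => e2 p, hbsq j]
  have sqterm : ∑ i, ∑ p, w i p ^ 2 = ∑ j : Fin l, sval M (j : ℕ) ^ 2 := by
    have e1 : ∀ p, ∑ i, w i p ^ 2 = ∑ j : Fin l, b j p ^ 2 := by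
      intro p
      have e2 : ∀ i, w i p ^ 2 = ∑ j : Fin l, ∑ j' : Fin l, (b j p * L i j) * (b j' p * L i j') := by
        intro i
        rw [hw]
        simp only [sq, Finset.sum_mul_sum]
      rw [Finset.sum_congr rfl fun i (_ : i ∈ Finset.univ) => e2 i, Finset.sum_comm]
      refine Finset.sum_congr rfl fun j _ => ?_
      have e3 : ∀ i, ∑ j' : Fin l, (b j p * L i j) * (b j' p * L i j')
          = ∑ j' : Fin l, (b j p * b j' p) * (L i j * L i j') := by
        intro i
        exact Finset.sum_congr rfl fun j' _ => by ring
      rw [Finset.sum_congr rfl fun i (_ : i ∈ Finset.univ) => e3 i, Finset.sum_comm]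
      have e4 : ∀ j' : Fin l, ∑ i, (b j p * b j' p) * (L i j * L i j')
          = (b j p * b j' p) * (if j = j' then 1 else 0) := by
        intro j'
        rw [← Finset.mul_sum, hL1e j j']
      rw [Finset.sum_congr rfl fun j' _ => e4 j']
      simp only [mul_ite, mul_one, mul_zero]
      rw [Finset.sum_ite_eq, if_pos (Finset.mem_univ j), sq]
    rw [Finset.sum_comm, Finset.sum_congr rfl fun p (_ : p ∈ Finset.univ) => e1 p,
      Finset.sum_comm]
    exact Finset.sum_congr rfl fun j _ => hbsq j
  -- total sum of squares of M
  obtain ⟨v, h_ortho, h_comp, h_eig⟩ := eigen_data M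
  have total : ∑ i, ∑ p, M i p ^ 2
      = ∑ c, (Matrix.isHermitian_conjTranspose_mul_self M).eigenvalues c := by
    have := core M v (Matrix.isHermitian_conjTranspose_mul_self M).eigenvalues
      h_ortho h_comp h_eig ∅
    simpa using this
  have hk : M.rank ≤ k := Matrix.rank_le_width M
  have hlk : l ≤ k := hl.trans hk
  have total2 : ∑ i, ∑ p, M i p ^ 2 = ∑ i ∈ Finset.range k, sval M i ^ 2 := by
    rw [total]
    set s := Tuple.sort
      (fun j => -(Matrix.isHermitian_conjTranspose_mul_self M).eigenvalues j) with hs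
    rw [← Equiv.sum_comp s (Matrix.isHermitian_conjTranspose_mul_self M).eigenvalues]
    rw [← Fin.sum_univ_eq_sum_range (fun i => sval M i ^ 2) k]
    refine Finset.sum_congr rfl fun d _ => ?_
    rw [sval_sq M (d : ℕ) d.isLt]
  -- expand the quadratic
  have flat : ∀ g : Fin m → Fin k → ℝ, ∑ i, ∑ p, g i p = ∑ x : Fin m × Fin k, g x.1 x.2 :=
    fun g => (Fintype.sum_prod_type' (f := g)).symm
  have expand : ∑ i, ∑ p, (M i p - w i p) ^ 2
      = ∑ i, ∑ p, M i p ^ 2 - (2 : ℝ) * ∑ i, ∑ p, M i p * w i p + ∑ i, ∑ p, w i p ^ 2 := by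
    rw [flat (fun i p => (M i p - w i p) ^ 2), flat (fun i p => M i p ^ 2),
      flat (fun i p => M i p * w i p), flat (fun i p => w i p ^ 2)]
    rw [Finset.mul_sum, ← Finset.sum_sub_distrib, ← Finset.sum_add_distrib]
    exact Finset.sum_congr rfl fun x _ => by ring
  have hwdef : ∀ i p, (∑ j : Fin l, (∑ t, M t p * L t j) * L i j) = w i p := fun i p => rfl
  calc ∑ i, ∑ p, (M i p - ∑ j : Fin l, (∑ t, M t p * L t j) * L i j) ^ 2
      = ∑ i, ∑ p, (M i p - w i p) ^ 2 := rfl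
    _ = ∑ i ∈ Finset.range k, sval M i ^ 2 - ∑ j : Fin l, sval M (j : ℕ) ^ 2 := by
        rw [expand, cross, sqterm, total2]; ring
    _ = ∑ i ∈ Finset.Ico l k, sval M i ^ 2 := by
        rw [Fin.sum_univ_eq_sum_range (fun i => sval M i ^ 2) l]
        simp only [Finset.range_eq_Ico]
        rw [← Finset.sum_Ico_consecutive (fun i => sval M i ^ 2) (Nat.zero_le l) hlk]
        ring
    _ = tailEnergy M l := ico_tail M l hl

end TFAux

/-- **Approximation error bound for the transform-based tensor factorization.**
Let `L ∈ ℝ^{I₃ × ℓ}` have orthonormal columns equal to the top-`ℓ` left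
singular vectors of `X_{<3>}` (column `k` is a unit eigenvector of
`X_{<3>} X_{<3>}ᵀ` with eigenvalue `σ_{k+1}(X_{<3>})²`), let
`X̂ = X ×₃ Lᵀ` and let `R ≤ rank(X̂⁽ⁿ⁾)` for every frontal slice `X̂⁽ⁿ⁾`.
Then there exist latent factor tensors `Â ∈ ℝ^{I₁ × R × ℓ}` and
`B̂ ∈ ℝ^{R × I₂ × ℓ}` such that `E = (Â △ B̂) ×₃ L` satisfies
`‖X − E‖_F² ≤ Σ_{n=1}^{ℓ} Σ_{i=R+1}^{rank(X̂⁽ⁿ⁾)} σ_i(X̂⁽ⁿ⁾)²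
  + Σ_{i=ℓ+1}^{rank(X_{<3>})} σ_i(X_{<3>})²`. -/
theorem tf_error_bound (I₁ I₂ I₃ ℓ R : ℕ)
    (X : Fin I₁ → Fin I₂ → Fin I₃ → ℝ)
    (hℓ : ℓ ≤ (unfold3 X).rank)
    (L : Matrix (Fin I₃) (Fin ℓ) ℝ)
    (hL1 : Lᵀ * L = 1)
    (hL2 : ∀ k : Fin ℓ,
      (unfold3 X * (unfold3 X)ᵀ) *ᵥ (fun j => L j k) =
        (sval (unfold3 X) k.1 ^ 2) • fun j => L j k)
    (Xhat : Fin I₁ → Fin I₂ → Fin ℓ → ℝ)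
    (hXhat : ∀ i₁ i₂ j, Xhat i₁ i₂ j = ∑ i₃, X i₁ i₂ i₃ * L i₃ j)
    (hR : ∀ n : Fin ℓ, R ≤ (Matrix.of fun i₁ i₂ => Xhat i₁ i₂ n).rank) :
    ∃ (Ahat : Fin I₁ → Fin R → Fin ℓ → ℝ) (Bhat : Fin R → Fin I₂ → Fin ℓ → ℝ),
      ∑ i₁, ∑ i₂, ∑ i₃,
        (X i₁ i₂ i₃ -
          ∑ j : Fin ℓ, (∑ r, Ahat i₁ r j * Bhat r i₂ j) * L i₃ j) ^ 2
      ≤ (∑ n : Fin ℓ, tailEnergy (Matrix.of fun i₁ i₂ => Xhat i₁ i₂ n) R) +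
          tailEnergy (unfold3 X) ℓ := by

  classical
  have hA : ∀ n : Fin ℓ, ∃ (A : Fin I₁ → Fin R → ℝ) (B : Fin R → Fin I₂ → ℝ),
      ∑ i₁, ∑ i₂, ((Matrix.of fun i₁ i₂ => Xhat i₁ i₂ n) i₁ i₂ - ∑ r, A i₁ r * B r i₂) ^ 2
        = tailEnergy (Matrix.of fun i₁ i₂ => Xhat i₁ i₂ n) R :=
    fun n => TFAux.approx _ (hR n)
  choose A B hAB using hA
  refine ⟨fun i r n => A n i r, fun r j n => B n r j, le_of_eq ?_⟩
  set M := unfold3 X with hM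
  have hL1e : ∀ j j' : Fin ℓ, ∑ i₃, L i₃ j * L i₃ j' = if j = j' then 1 else 0 := by
    intro j j'
    have := congrFun (congrFun hL1 j) j'
    simpa [Matrix.mul_apply, Matrix.transpose_apply, Matrix.one_apply] using this
  set D : Fin ℓ → Fin I₁ → Fin I₂ → ℝ :=
    fun n i₁ i₂ => Xhat i₁ i₂ n - ∑ r, A n i₁ r * B n r i₂ with hD
  set u : Fin I₁ → Fin I₂ → Fin I₃ → ℝ :=
    fun i₁ i₂ i₃ => X i₁ i₂ i₃ - ∑ j : Fin ℓ, Xhat i₁ i₂ j * L i₃ j with hu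
  -- orthogonal decomposition for fixed (i₁, i₂)
  have dec : ∀ i₁ i₂,
      ∑ i₃, (X i₁ i₂ i₃ - ∑ j : Fin ℓ, (∑ r, A j i₁ r * B j r i₂) * L i₃ j) ^ 2
      = ∑ i₃, u i₁ i₂ i₃ ^ 2 + ∑ n : Fin ℓ, D n i₁ i₂ ^ 2 := by
    intro i₁ i₂
    have key : ∀ i₃, X i₁ i₂ i₃ - ∑ j : Fin ℓ, (∑ r, A j i₁ r * B j r i₂) * L i₃ j
        = u i₁ i₂ i₃ + ∑ j : Fin ℓ, D j i₁ i₂ * L i₃ j := by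
      intro i₃
      have h1 : ∑ j : Fin ℓ, D j i₁ i₂ * L i₃ j
          = ∑ j : Fin ℓ, Xhat i₁ i₂ j * L i₃ j
            - ∑ j : Fin ℓ, (∑ r, A j i₁ r * B j r i₂) * L i₃ j := by
        rw [← Finset.sum_sub_distrib]
        exact Finset.sum_congr rfl fun j _ => by rw [hD]; ring
      rw [h1, hu]; ring
    have key2 : ∀ i₃, (X i₁ i₂ i₃ - ∑ j : Fin ℓ, (∑ r, A j i₁ r * B j r i₂) * L i₃ j) ^ 2
        = (u i₁ i₂ i₃ + ∑ j : Fin ℓ, D j i₁ i₂ * L i₃ j) ^ 2 := fun i₃ => by rw [key i₃]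
    rw [Finset.sum_congr rfl fun i₃ (_ : i₃ ∈ Finset.univ) => key2 i₃]
    have crossz : ∑ i₃, u i₁ i₂ i₃ * (∑ j : Fin ℓ, D j i₁ i₂ * L i₃ j) = 0 := by
      have e1 : ∀ i₃, u i₁ i₂ i₃ * (∑ j : Fin ℓ, D j i₁ i₂ * L i₃ j)
          = ∑ j : Fin ℓ, D j i₁ i₂ * (u i₁ i₂ i₃ * L i₃ j) := by
        intro i₃
        rw [Finset.mul_sum]
        exact Finset.sum_congr rfl fun j _ => by ring
      rw [Finset.sum_congr rfl fun i₃ (_ : i₃ ∈ Finset.univ) => e1 i₃, Finset.sum_comm]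
      apply Finset.sum_eq_zero
      intro j _
      rw [← Finset.mul_sum]
      have e2 : ∑ i₃, u i₁ i₂ i₃ * L i₃ j = 0 := by
        simp only [hu, sub_mul]
        rw [Finset.sum_sub_distrib]
        have e3 : ∑ i₃, (∑ j' : Fin ℓ, Xhat i₁ i₂ j' * L i₃ j') * L i₃ j
            = ∑ j' : Fin ℓ, Xhat i₁ i₂ j' * ∑ i₃, L i₃ j' * L i₃ j := by
          simp only [Finset.sum_mul, Finset.mul_sum]
          rw [Finset.sum_comm]
          exact Finset.sum_congr rfl fun j' _ => Finset.sum_congr rfl fun i₃ _ => by ring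
        rw [e3]
        simp only [hL1e, mul_ite, mul_one, mul_zero]
        rw [Finset.sum_ite_eq' Finset.univ j (fun x => Xhat i₁ i₂ x),
          if_pos (Finset.mem_univ j), ← hXhat i₁ i₂ j, sub_self]
      rw [e2, mul_zero]
    have sqD : ∑ i₃, (∑ j : Fin ℓ, D j i₁ i₂ * L i₃ j) ^ 2 = ∑ n : Fin ℓ, D n i₁ i₂ ^ 2 := by
      have e1 : ∀ i₃, (∑ j : Fin ℓ, D j i₁ i₂ * L i₃ j) ^ 2
          = ∑ j : Fin ℓ, ∑ j' : Fin ℓ, (D j i₁ i₂ * D j' i₁ i₂) * (L i₃ j * L i₃ j') := by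
        intro i₃
        rw [sq, Finset.sum_mul_sum]
        exact Finset.sum_congr rfl fun j _ => Finset.sum_congr rfl fun j' _ => by ring
      rw [Finset.sum_congr rfl fun i₃ (_ : i₃ ∈ Finset.univ) => e1 i₃, Finset.sum_comm]
      refine Finset.sum_congr rfl fun j _ => ?_
      rw [Finset.sum_comm]
      have e2 : ∀ j' : Fin ℓ, ∑ i₃, (D j i₁ i₂ * D j' i₁ i₂) * (L i₃ j * L i₃ j')
          = (D j i₁ i₂ * D j' i₁ i₂) * (if j = j' then 1 else 0) := by
        intro j'
        rw [← Finset.mul_sum, hL1e j j']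
      rw [Finset.sum_congr rfl fun j' _ => e2 j']
      simp only [mul_ite, mul_one, mul_zero]
      rw [Finset.sum_ite_eq, if_pos (Finset.mem_univ j), sq]
    have e4 : ∀ i₃, (u i₁ i₂ i₃ + ∑ j : Fin ℓ, D j i₁ i₂ * L i₃ j) ^ 2
        = u i₁ i₂ i₃ ^ 2 + 2 * (u i₁ i₂ i₃ * ∑ j : Fin ℓ, D j i₁ i₂ * L i₃ j)
          + (∑ j : Fin ℓ, D j i₁ i₂ * L i₃ j) ^ 2 := fun i₃ => by ring
    rw [Finset.sum_congr rfl fun i₃ (_ : i₃ ∈ Finset.univ) => e4 i₃,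
      Finset.sum_add_distrib, Finset.sum_add_distrib, ← Finset.mul_sum, crossz, sqD]
    ring
  rw [Finset.sum_congr rfl fun i₁ (_ : i₁ ∈ Finset.univ) =>
    Finset.sum_congr rfl fun i₂ (_ : i₂ ∈ Finset.univ) => dec i₁ i₂]
  simp only [Finset.sum_add_distrib]
  have part1 : ∑ i₁, ∑ i₂, ∑ i₃, u i₁ i₂ i₃ ^ 2 = tailEnergy M ℓ := by
    have hproj := TFAux.proj M L hL1 hL2 hℓ
    have hcoord : ∀ i₁ i₂ i₃, u i₁ i₂ i₃
        = M i₃ (finProdFinEquiv (i₁, i₂))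
          - ∑ j : Fin ℓ, (∑ t, M t (finProdFinEquiv (i₁, i₂)) * L t j) * L i₃ j := by
      intro i₁ i₂ i₃
      have hMe : ∀ t, M t (finProdFinEquiv (i₁, i₂)) = X i₁ i₂ t := by
        intro t
        rw [hM]
        show X (finProdFinEquiv.symm (finProdFinEquiv (i₁, i₂))).1
          (finProdFinEquiv.symm (finProdFinEquiv (i₁, i₂))).2 t = X i₁ i₂ t
        rw [Equiv.symm_apply_apply]
      rw [hu]
      simp only [hMe]
      congr 1
      exact Finset.sum_congr rfl fun j _ => by rw [← hXhat i₁ i₂ j]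
    have step1 : ∑ i₁, ∑ i₂, ∑ i₃, u i₁ i₂ i₃ ^ 2
        = ∑ q : Fin I₁ × Fin I₂, ∑ i₃, u q.1 q.2 i₃ ^ 2 :=
      (Fintype.sum_prod_type' (f := fun i₁ i₂ => ∑ i₃, u i₁ i₂ i₃ ^ 2)).symm
    have step2 : ∑ q : Fin I₁ × Fin I₂, ∑ i₃, u q.1 q.2 i₃ ^ 2
        = ∑ q : Fin I₁ × Fin I₂,
            (fun p => ∑ i₃, (M i₃ p - ∑ j : Fin ℓ, (∑ t, M t p * L t j) * L i₃ j) ^ 2)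
              (finProdFinEquiv q) := by
      refine Finset.sum_congr rfl fun q _ => Finset.sum_congr rfl fun i₃ _ => ?_
      rw [hcoord q.1 q.2 i₃]
    have step3 := Equiv.sum_comp finProdFinEquiv
      (fun p => ∑ i₃, (M i₃ p - ∑ j : Fin ℓ, (∑ t, M t p * L t j) * L i₃ j) ^ 2)
    rw [step1, step2, step3, ← hproj]
    exact Finset.sum_comm
  have part2 : ∑ i₁, ∑ i₂, ∑ n : Fin ℓ, D n i₁ i₂ ^ 2
      = ∑ n : Fin ℓ, tailEnergy (Matrix.of fun i₁ i₂ => Xhat i₁ i₂ n) R := by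
    have swap : ∑ i₁, ∑ i₂, ∑ n : Fin ℓ, D n i₁ i₂ ^ 2
        = ∑ n : Fin ℓ, ∑ i₁, ∑ i₂, D n i₁ i₂ ^ 2 := by
      have s1 : ∀ i₁, ∑ i₂, ∑ n : Fin ℓ, D n i₁ i₂ ^ 2
          = ∑ n : Fin ℓ, ∑ i₂, D n i₁ i₂ ^ 2 := fun i₁ => Finset.sum_comm
      rw [Finset.sum_congr rfl fun i₁ (_ : i₁ ∈ Finset.univ) => s1 i₁]
      exact Finset.sum_comm
    rw [swap]
    refine Finset.sum_congr rfl fun n _ => ?_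
    rw [← hAB n]
    rfl
  rw [part1, part2, add_comm]
end

section
/- Let M ∈ ℝ^{I₃ × I₃} be an invertible matrix and let X be a third-order real tensor of size I₁ × I₂ × I₃ whose tubal-rank with respect to M is at most R, i.e., rank((X ×₃ M)^{(n)}) ≤ R for all n = 1, …, I₃. Then there exist third-order factor tensors A ∈ ℝ^{I₁ × R × I₃} and B ∈ ℝ^{R × I₂ × I₃} such that X = A *_M B, where A *_M B = ((A ×₃ M) △ (B ×₃ M)) ×₃ M⁻¹. -/
open Matrix

/-- Mode-3 product of a third-order tensor with a matrix `A ∈ ℝ^{J × I₃}`. -/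
def mode3Prod {I₁ I₂ I₃ J : ℕ} (X : Fin I₁ → Fin I₂ → Fin I₃ → ℝ)
    (A : Matrix (Fin J) (Fin I₃) ℝ) : Fin I₁ → Fin I₂ → Fin J → ℝ :=
  fun i₁ i₂ j => ∑ i₃, X i₁ i₂ i₃ * A j i₃

/-- Face-wise product of third-order tensors: the `n`-th frontal slice of
`A △ B` is the matrix product of the `n`-th frontal slices of `A` and `B`. -/
def facewise {I₁ I₂ R I₃ : ℕ} (A : Fin I₁ → Fin R → Fin I₃ → ℝ)
    (B : Fin R → Fin I₂ → Fin I₃ → ℝ) : Fin I₁ → Fin I₂ → Fin I₃ → ℝ :=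
  fun i₁ i₂ n => ∑ r, A i₁ r n * B r i₂ n

/-- The invertible-transform-based t-product
`A *_M B = ((A ×₃ M) △ (B ×₃ M)) ×₃ M⁻¹`. -/
noncomputable def tProduct {I₁ I₂ I₃ R : ℕ} (M : Matrix (Fin I₃) (Fin I₃) ℝ)
    (A : Fin I₁ → Fin R → Fin I₃ → ℝ) (B : Fin R → Fin I₂ → Fin I₃ → ℝ) :
    Fin I₁ → Fin I₂ → Fin I₃ → ℝ :=
  mode3Prod (facewise (mode3Prod A M) (mode3Prod B M)) M⁻¹

/-- Rank factorization: a matrix of rank at most `R` factors through `Fin R`. -/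
lemma exists_mul_factor {m n R : ℕ} (Y : Matrix (Fin m) (Fin n) ℝ) (h : Y.rank ≤ R) :
    ∃ (A : Matrix (Fin m) (Fin R) ℝ) (B : Matrix (Fin R) (Fin n) ℝ), Y = A * B := by
  classical
  set W := LinearMap.range Y.mulVecLin with hW
  have hd : Module.finrank ℝ W ≤ R := h
  let b := Module.finBasis ℝ W
  let ι : Fin (Module.finrank ℝ W) → Fin R := Fin.castLE hd
  have hι : Function.Injective ι := Fin.castLE_injective hd
  let p : (Fin n → ℝ) →ₗ[ℝ] (Fin R → ℝ) :=
    (Function.ExtendByZero.linearMap ℝ ι) ∘ₗ b.equivFun.toLinearMap ∘ₗ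
      Y.mulVecLin.rangeRestrict
  let q : (Fin R → ℝ) →ₗ[ℝ] (Fin m → ℝ) :=
    W.subtype ∘ₗ b.equivFun.symm.toLinearMap ∘ₗ (LinearMap.funLeft ℝ ℝ ι)
  have hc : ∀ (c : Fin (Module.finrank ℝ W) → ℝ),
      (fun i => Function.extend ι c 0 (ι i)) = c := fun c =>
    funext fun i => hι.extend_apply _ _ _
  have hqp : q ∘ₗ p = Y.mulVecLin := by
    refine LinearMap.ext fun v => ?_
    simp only [q, p, LinearMap.comp_apply, LinearMap.funLeft_apply,
      Function.ExtendByZero.linearMap_apply, hc]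
    simpa [map_sum, hι.extend_apply] using congrArg W.subtype (b.sum_repr (Y.mulVecLin.rangeRestrict v))
  refine ⟨LinearMap.toMatrix' q, LinearMap.toMatrix' p, ?_⟩
  have : Y = LinearMap.toMatrix' Y.mulVecLin := by
    ext i j
    simp [LinearMap.toMatrix'_apply, Matrix.mulVecLin_apply, Matrix.mulVec, dotProduct, Pi.single_apply]
  rw [this, ← hqp, LinearMap.toMatrix'_comp]

lemma mode3_cancel {I₁ I₂ I₃ : ℕ} (T : Fin I₁ → Fin I₂ → Fin I₃ → ℝ)
    (M N : Matrix (Fin I₃) (Fin I₃) ℝ) (h : M * N = 1) :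
    mode3Prod (mode3Prod T N) M = T := by
  funext i₁ i₂ n
  simp only [mode3Prod]
  simp only [Finset.sum_mul]
  rw [Finset.sum_comm]
  calc ∑ j, ∑ k, T i₁ i₂ j * N k j * M n k
      = ∑ j, T i₁ i₂ j * (M * N) n j := by
        refine Finset.sum_congr rfl fun j _ => ?_
        rw [Matrix.mul_apply, Finset.mul_sum]
        exact Finset.sum_congr rfl fun k _ => by ring
    _ = T i₁ i₂ n := by
        rw [h]
        simp [Matrix.one_apply, Finset.sum_ite_eq, eq_comm]

/-- **T-product-induced tensor factorization.**
If `M` is invertible and the tubal-rank of `X` with respect to `M` is at most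
`R` (each frontal slice of `X ×₃ M` has rank `≤ R`), then there exist factor
tensors `A ∈ ℝ^{I₁ × R × I₃}` and `B ∈ ℝ^{R × I₂ × I₃}` with `X = A *_M B`. -/
theorem tf_factorization_of_tubal_rank (I₁ I₂ I₃ R : ℕ)
    (M : Matrix (Fin I₃) (Fin I₃) ℝ) (hM : IsUnit M)
    (X : Fin I₁ → Fin I₂ → Fin I₃ → ℝ)
    (hrank : ∀ n : Fin I₃,
      (Matrix.of fun i₁ i₂ => mode3Prod X M i₁ i₂ n).rank ≤ R) :
    ∃ (A : Fin I₁ → Fin R → Fin I₃ → ℝ) (B : Fin R → Fin I₂ → Fin I₃ → ℝ),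
      X = tProduct M A B := by
  classical
  have hMdet : IsUnit M.det := (Matrix.isUnit_iff_isUnit_det M).mp hM
  have hMN : M * M⁻¹ = 1 := Matrix.mul_nonsing_inv M hMdet
  have hNM : M⁻¹ * M = 1 := Matrix.nonsing_inv_mul M hMdet
  choose Af Bf hAB using fun n => exists_mul_factor _ (hrank n)
  let Ahat : Fin I₁ → Fin R → Fin I₃ → ℝ := fun i₁ r n => Af n i₁ r
  let Bhat : Fin R → Fin I₂ → Fin I₃ → ℝ := fun r i₂ n => Bf n r i₂
  refine ⟨mode3Prod Ahat M⁻¹, mode3Prod Bhat M⁻¹, ?_⟩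
  unfold tProduct
  rw [mode3_cancel Ahat M M⁻¹ hMN, mode3_cancel Bhat M M⁻¹ hMN]
  have hface : facewise Ahat Bhat = mode3Prod X M := by
    funext i₁ i₂ n
    have := congrFun (congrFun (hAB n) i₁) i₂
    simp only [Matrix.of_apply, Matrix.mul_apply] at this
    simpa [facewise, Ahat, Bhat] using this.symm
  rw [hface, mode3_cancel X M⁻¹ M hNM]
end

section
/- Let X be a third-order real tensor of size I₁ × I₂ × I₃ and for n = 1, 2, 3 let P_n ∈ ℝ^{I_n × I_n} be orthogonal projection matrices (P_n² = P_n = P_nᵀ). Then ‖X − X ×₁ P₁ ×₂ P₂ ×₃ P₃‖_F² ≤ Σ_{n=1}^{3} ‖X − X ×_n P_n‖_F². -/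
/-!
After vectorization the mode products with `P₁, P₂, P₃` become the matrices
`R = P₁ ⊗ 1 ⊗ 1`, `Q = 1 ⊗ P₂ ⊗ 1` and `S = 1 ⊗ 1 ⊗ P₃`, and `Q`, `S` are commuting orthogonal
projections. Then `x - SQRx = (x - Sx) + S(x - Qx) + SQ(x - Rx)` is a sum of pairwise orthogonal
vectors (the middle and last ones are orthogonal because `S(x - Qx) = y - Qy` for `y = Sx` while
`SQ = QS` has range in that of `Q`), and the projections `S`, `SQ` do not increase norms, so
Pythagoras gives the bound.
-/

open Matrix

/-- Mode-1 product of a third-order tensor with a matrix `A ∈ ℝ^{J × I₁}`. -/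
def mode1Prod {I₁ I₂ I₃ J : ℕ} (X : Fin I₁ → Fin I₂ → Fin I₃ → ℝ)
    (A : Matrix (Fin J) (Fin I₁) ℝ) : Fin J → Fin I₂ → Fin I₃ → ℝ :=
  fun j i₂ i₃ => ∑ i₁, X i₁ i₂ i₃ * A j i₁

/-- Mode-2 product of a third-order tensor with a matrix `A ∈ ℝ^{J × I₂}`. -/
def mode2Prod {I₁ I₂ I₃ J : ℕ} (X : Fin I₁ → Fin I₂ → Fin I₃ → ℝ)
    (A : Matrix (Fin J) (Fin I₂) ℝ) : Fin I₁ → Fin J → Fin I₃ → ℝ :=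
  fun i₁ j i₃ => ∑ i₂, X i₁ i₂ i₃ * A j i₂

section StarProjection

open scoped InnerProductSpace

variable {𝕜 E : Type*} [RCLike 𝕜] [NormedAddCommGroup E] [InnerProductSpace 𝕜 E] [CompleteSpace E]
  {q r : E →L[𝕜] E}

theorem IsStarProjection.inner_sub_apply_apply_eq_zero {p : E →L[𝕜] E} (hp : IsStarProjection p)
    (x y : E) :    ⟪x - p x, p y⟫_𝕜 = 0 := by
  have hsymm : ⟪p (x - p x), y⟫_𝕜 = ⟪x - p x, p y⟫_𝕜 := hp.isSelfAdjoint.isSymmetric _ _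
  have hidem : p (p x) = p x := congr($(hp.isIdempotentElem.eq) x)
  rw [← hsymm, map_sub, hidem, sub_self, inner_zero_left]

theorem IsStarProjection.norm_apply_le {p : E →L[𝕜] E} (hp : IsStarProjection p) (x : E) :
    ‖p x‖ ≤ ‖x‖ := by
  simpa using p.le_of_opNorm_le (hp.norm_le p) x

theorem norm_sub_apply_apply_apply_sq_le (p : E →L[𝕜] E) (hq : IsStarProjection q)
    (hr : IsStarProjection r) (hrq : Commute r q) (x : E) :
    ‖x - r (q (p x))‖ ^ 2 ≤ ‖x - p x‖ ^ 2 + ‖x - q x‖ ^ 2 + ‖x - r x‖ ^ 2 := by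
  have hdecomp : x - r (q (p x)) = (x - r x) + r (x - q x) + r (q (x - p x)) := by
    simp only [map_sub]; abel
  have hab : ⟪x - r x, r (x - q x)⟫_𝕜 = 0 := hr.inner_sub_apply_apply_eq_zero _ _
  have hac : ⟪x - r x, r (q (x - p x))⟫_𝕜 = 0 := hr.inner_sub_apply_apply_eq_zero _ _
  have hbc : ⟪r (x - q x), r (q (x - p x))⟫_𝕜 = 0 := by
    have hrq_apply (y : E) : r (q y) = q (r y) := congr($(hrq.eq) y)
    rw [map_sub, hrq_apply, hrq_apply]
    exact hq.inner_sub_apply_apply_eq_zero _ _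
  have hpyth {a b : E} (h : ⟪a, b⟫_𝕜 = 0) : ‖a + b‖ ^ 2 = ‖a‖ ^ 2 + ‖b‖ ^ 2 := by
    simp only [sq, norm_add_sq_eq_norm_sq_add_norm_sq_of_inner_eq_zero a b h]
  have hb : ‖r (x - q x)‖ ≤ ‖x - q x‖ := hr.norm_apply_le _
  have hc : ‖r (q (x - p x))‖ ≤ ‖x - p x‖ := (hr.norm_apply_le _).trans (hq.norm_apply_le _)
  rw [hdecomp, hpyth (by rw [inner_add_left, hac, hbc, add_zero]), hpyth hab]
  linarith [pow_le_pow_left₀ (norm_nonneg _) hb 2, pow_le_pow_left₀ (norm_nonneg _) hc 2]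

end StarProjection

section Kronecker

open scoped Kronecker

variable {R m n : Type*} [CommSemiring R] [Fintype m] [Fintype n]

theorem IsStarProjection.kronecker [StarRing R] {A : Matrix m m R} {B : Matrix n n R}
    (hA : IsStarProjection A) (hB : IsStarProjection B) : IsStarProjection (A ⊗ₖ B) where
  isIdempotentElem := by
    rw [IsIdempotentElem, ← mul_kronecker_mul, hA.isIdempotentElem.eq, hB.isIdempotentElem.eq]
  isSelfAdjoint := by
    rw [IsSelfAdjoint, star_eq_conjTranspose, conjTranspose_kronecker, ← star_eq_conjTranspose,
      ← star_eq_conjTranspose, hA.isSelfAdjoint.star_eq, hB.isSelfAdjoint.star_eq]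

namespace Matrix

theorem commute_kronecker_one_one_kronecker [DecidableEq m] [DecidableEq n] (A : Matrix m m R)
    (B : Matrix n n R) : Commute (A ⊗ₖ (1 : Matrix n n R)) ((1 : Matrix m m R) ⊗ₖ B) := by
  rw [Commute, SemiconjBy, ← mul_kronecker_mul, ← mul_kronecker_mul]
  simp

theorem commute_one_kronecker [DecidableEq m] {A B : Matrix n n R} (h : Commute A B) :
    Commute ((1 : Matrix m m R) ⊗ₖ A) (1 ⊗ₖ B) := by
  rw [Commute, SemiconjBy, ← mul_kronecker_mul, ← mul_kronecker_mul, h.eq]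

theorem isStarProjection_of_mul_self_eq_of_transpose_eq [StarRing R] [TrivialStar R]
    {P : Matrix n n R} (hidem : P * P = P) (hsymm : Pᵀ = P) : IsStarProjection P :=
  ⟨hidem, by rwa [IsSelfAdjoint, star_eq_conjTranspose, conjTranspose_eq_transpose_of_trivial]⟩

end Matrix

end Kronecker

section Vectorize

open scoped Kronecker

def vectorize {ι₁ ι₂ ι₃ : Type*} (X : ι₁ → ι₂ → ι₃ → ℝ) : EuclideanSpace ℝ (ι₁ × ι₂ × ι₃) :=
  WithLp.toLp 2 fun i => X i.1 i.2.1 i.2.2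

theorem norm_vectorize_sub_sq {ι₁ ι₂ ι₃ : Type*} [Fintype ι₁] [Fintype ι₂] [Fintype ι₃]
    (X Y : ι₁ → ι₂ → ι₃ → ℝ) :
    ‖vectorize X - vectorize Y‖ ^ 2 = ∑ i₁, ∑ i₂, ∑ i₃, (X i₁ i₂ i₃ - Y i₁ i₂ i₃) ^ 2 := by
  simp [vectorize, EuclideanSpace.norm_sq_eq, Fintype.sum_prod_type]

variable {I₁ I₂ I₃ : ℕ}

theorem vectorize_mode1Prod (X : Fin I₁ → Fin I₂ → Fin I₃ → ℝ) (P : Matrix (Fin I₁) (Fin I₁) ℝ) :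
    vectorize (mode1Prod X P) = toEuclideanCLM (𝕜 := ℝ) (P ⊗ₖ 1) (vectorize X) := by
  ext ⟨i₁, i₂, i₃⟩
  simp [vectorize, mode1Prod, toEuclideanCLM_toLp, mulVec, dotProduct,
    Fintype.sum_prod_type, one_apply, mul_comm]

theorem vectorize_mode2Prod (X : Fin I₁ → Fin I₂ → Fin I₃ → ℝ) (P : Matrix (Fin I₂) (Fin I₂) ℝ) :
    vectorize (mode2Prod X P) = toEuclideanCLM (𝕜 := ℝ) (1 ⊗ₖ (P ⊗ₖ 1)) (vectorize X) := by
  ext ⟨i₁, i₂, i₃⟩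
  simp [vectorize, mode2Prod, toEuclideanCLM_toLp, mulVec, dotProduct,
    Fintype.sum_prod_type, one_apply, mul_comm]

theorem vectorize_mode3Prod (X : Fin I₁ → Fin I₂ → Fin I₃ → ℝ) (P : Matrix (Fin I₃) (Fin I₃) ℝ) :
    vectorize (mode3Prod X P) = toEuclideanCLM (𝕜 := ℝ) (1 ⊗ₖ (1 ⊗ₖ P)) (vectorize X) := by
  ext ⟨i₁, i₂, i₃⟩
  simp [vectorize, mode3Prod, toEuclideanCLM_toLp, mulVec, dotProduct,
    Fintype.sum_prod_type, one_apply, mul_comm]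

end Vectorize

theorem multilinear_projection_error_bound_general (I₁ I₂ I₃ : ℕ)
    (X : Fin I₁ → Fin I₂ → Fin I₃ → ℝ)
    (P₁ : Matrix (Fin I₁) (Fin I₁) ℝ) (P₂ : Matrix (Fin I₂) (Fin I₂) ℝ)
    (P₃ : Matrix (Fin I₃) (Fin I₃) ℝ)
    (hP₂idem : P₂ * P₂ = P₂) (hP₂symm : P₂ᵀ = P₂)
    (hP₃idem : P₃ * P₃ = P₃) (hP₃symm : P₃ᵀ = P₃) :
    ∑ i₁, ∑ i₂, ∑ i₃,
      (X i₁ i₂ i₃ - mode3Prod (mode2Prod (mode1Prod X P₁) P₂) P₃ i₁ i₂ i₃) ^ 2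
    ≤ (∑ i₁, ∑ i₂, ∑ i₃, (X i₁ i₂ i₃ - mode1Prod X P₁ i₁ i₂ i₃) ^ 2) +
      (∑ i₁, ∑ i₂, ∑ i₃, (X i₁ i₂ i₃ - mode2Prod X P₂ i₁ i₂ i₃) ^ 2) +
      (∑ i₁, ∑ i₂, ∑ i₃, (X i₁ i₂ i₃ - mode3Prod X P₃ i₁ i₂ i₃) ^ 2) := by
  have hP₂ := isStarProjection_of_mul_self_eq_of_transpose_eq hP₂idem hP₂symm
  have hP₃ := isStarProjection_of_mul_self_eq_of_transpose_eq hP₃idem hP₃symm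
  simp only [← norm_vectorize_sub_sq, vectorize_mode3Prod, vectorize_mode2Prod, vectorize_mode1Prod]
  exact norm_sub_apply_apply_apply_sq_le _
    (((IsStarProjection.one _).kronecker (hP₂.kronecker (.one _))).map _)
    (((IsStarProjection.one _).kronecker ((IsStarProjection.one _).kronecker hP₃)).map _)
    ((commute_one_kronecker (commute_kronecker_one_one_kronecker P₂ P₃)).symm.map _) _

/-- **Projection error bound for multilinear projections.**
If `P₁, P₂, P₃` are orthogonal projection matrices, then
`‖X − X ×₁ P₁ ×₂ P₂ ×₃ P₃‖_F² ≤ Σ_{n=1}^{3} ‖X − X ×ₙ Pₙ‖_F²`. -/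
theorem multilinear_projection_error_bound (I₁ I₂ I₃ : ℕ)
    (X : Fin I₁ → Fin I₂ → Fin I₃ → ℝ)
    (P₁ : Matrix (Fin I₁) (Fin I₁) ℝ) (P₂ : Matrix (Fin I₂) (Fin I₂) ℝ)
    (P₃ : Matrix (Fin I₃) (Fin I₃) ℝ)
    (hP₁idem : P₁ * P₁ = P₁) (hP₁symm : P₁ᵀ = P₁)
    (hP₂idem : P₂ * P₂ = P₂) (hP₂symm : P₂ᵀ = P₂)
    (hP₃idem : P₃ * P₃ = P₃) (hP₃symm : P₃ᵀ = P₃) :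
    ∑ i₁, ∑ i₂, ∑ i₃,
      (X i₁ i₂ i₃ - mode3Prod (mode2Prod (mode1Prod X P₁) P₂) P₃ i₁ i₂ i₃) ^ 2
    ≤ (∑ i₁, ∑ i₂, ∑ i₃, (X i₁ i₂ i₃ - mode1Prod X P₁ i₁ i₂ i₃) ^ 2) +
      (∑ i₁, ∑ i₂, ∑ i₃, (X i₁ i₂ i₃ - mode2Prod X P₂ i₁ i₂ i₃) ^ 2) +
      (∑ i₁, ∑ i₂, ∑ i₃, (X i₁ i₂ i₃ - mode3Prod X P₃ i₁ i₂ i₃) ^ 2) :=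
  multilinear_projection_error_bound_general I₁ I₂ I₃ X P₁ P₂ P₃ hP₂idem hP₂symm hP₃idem hP₃symm
end
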